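/- arXiv:2210.15103 — 5 statements merged into one kernel-verified Lean document; each statement's English description precedes it below -/
import Mathlib

section
/- Let n ≥ 1 and let F : 𝔽_{2^n} → 𝔽_{2^n} be the power function F(x) = x^d for some positive integer d. Then F is 0-APN (i.e., every pair (u,v) with F(0)+F(u)+F(v)+F(u+v)=0 satisfies u·v·(u+v)=0) if and only if the equation (x+1)^d + x^d + 1 = 0 has no solution x ∈ 𝔽_{2^n} \ 𝔽_2. -/
theorem stmt_0 (n : ℕ) (hn : 1 ≤ n) (d : ℕ) (hd : 1 ≤ d) :
    (∀ u v : GaloisField 2 n,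
        (0 : GaloisField 2 n) ^ d + u ^ d + v ^ d + (u + v) ^ d = 0 → u * v * (u + v) = 0) ↔
      ¬ ∃ x : GaloisField 2 n, x ≠ 0 ∧ x ≠ 1 ∧ (x + 1) ^ d + x ^ d + 1 = 0 := by
  haveI : Fact (Nat.Prime 2) := ⟨Nat.prime_two⟩
  have h2 : (2 : GaloisField 2 n) = 0 := CharTwo.two_eq_zero
  have h0 : (0 : GaloisField 2 n) ^ d = 0 := zero_pow (by omega)
  constructor
  · rintro h ⟨x, hx0, hx1, hx⟩
    have := h x 1 (by rw [h0, one_pow]; linear_combination hx)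
    rcases mul_eq_zero.mp this with h' | h'
    · rcases mul_eq_zero.mp h' with h'' | h''
      · exact hx0 h''
      · exact one_ne_zero h''
    · exact hx1 (by linear_combination h' - h2)
  · intro h u v huv
    by_contra hne
    have hu : u ≠ 0 := fun h' => hne (by simp [h'])
    have hv : v ≠ 0 := fun h' => hne (by simp [h'])
    have hs : u + v ≠ 0 := fun h' => hne (by rw [h', mul_zero])
    apply h
    refine ⟨u * v⁻¹, mul_ne_zero hu (inv_ne_zero hv), ?_, ?_⟩
    · intro h1
      apply hs
      have : u = v := by
        field_simp at h1
        exact h1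
      rw [this]
      linear_combination (v : GaloisField 2 n) * h2
    · rw [h0, zero_add] at huv
      have hadd : u * v⁻¹ + 1 = (u + v) * v⁻¹ := by field_simp
      rw [hadd, mul_pow, mul_pow]
      have hvinv : v ^ d * (v⁻¹) ^ d = 1 := by
        rw [← mul_pow, mul_inv_cancel₀ hv, one_pow]
      linear_combination (v⁻¹ : GaloisField 2 n) ^ d * huv + hvinv +
        (1 - v ^ d * (v⁻¹) ^ d) * h2
end

section
/- Let n be a positive integer. The power function f(x) = x^{-9} on 𝔽_{2^n}, with the convention f(0) = 0 (i.e., f(x) = x^{2^n - 1 - 9}), is 0-APN if and only if 9 does not divide n. -/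
open Polynomial

section aux

variable {K : Type*} [Field K]

private lemma gf_iter_pow {K : Type*} [Monoid K] (s : K) (m : ℕ) (h : s ^ (2 ^ m) = s) :
    ∀ A : ℕ, s ^ (2 ^ (m * A)) = s := by
  intro A
  induction A with
  | zero => simp
  | succ A ih =>
    have h2 : 2 ^ (m * (A + 1)) = 2 ^ (m * A) * 2 ^ m := by rw [Nat.mul_succ, pow_add]
    rw [h2, pow_mul, ih, h]

private lemma gf_chain (s : K) (h2 : (2 : K) = 0) (hq : s ^ 9 = s + 1) : s ^ 512 = s := by
  have e4 : s ^ 16 = s ^ 8 + s ^ 7 := by linear_combination (s ^ 7) * hq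
  have e5 : s ^ 32 = s ^ 8 + s ^ 7 + s ^ 6 + s ^ 5 := by
    linear_combination (s ^ 8 + s ^ 7 + s ^ 16) * e4 + (s ^ 7 + 2 * s ^ 6 + s ^ 5) * hq +
      (s ^ 7 + s ^ 6) * h2
  have e6 : s ^ 64 = s ^ 8 + s ^ 7 + s ^ 6 + s ^ 5 + s ^ 4 + s ^ 3 + s ^ 2 + s := by
    linear_combination (s ^ 8 + s ^ 7 + s ^ 6 + s ^ 5 + s ^ 32) * e5 +
      (s ^ 7 + 2 * s ^ 6 + 3 * s ^ 5 + 4 * s ^ 4 + 3 * s ^ 3 + 2 * s ^ 2 + s) * hq +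
      (s ^ 7 + 2 * s ^ 6 + 3 * s ^ 5 + 3 * s ^ 4 + 2 * s ^ 3 + s ^ 2) * h2
  have e7 : s ^ 128 = s ^ 7 + s ^ 5 + s ^ 3 + s := by
    linear_combination
      (s ^ 8 + s ^ 7 + s ^ 6 + s ^ 5 + s ^ 4 + s ^ 3 + s ^ 2 + s + s ^ 64) * e6 +
      (s ^ 7 + 2 * s ^ 6 + 3 * s ^ 5 + 4 * s ^ 4 + 5 * s ^ 3 + 6 * s ^ 2 + 7 * s + 8) * hq +
      (4 * s ^ 8 + 4 * s ^ 7 + 5 * s ^ 6 + 5 * s ^ 5 + 6 * s ^ 4 + 6 * s ^ 3 + 7 * s ^ 2 +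
        7 * s + 4) * h2
  have e8 : s ^ 256 = s ^ 5 + s := by
    linear_combination (s ^ 7 + s ^ 5 + s ^ 3 + s + s ^ 128) * e7 +
      (s ^ 5 + 2 * s ^ 3 + 3 * s) * hq +
      (2 * s ^ 8 + 2 * s ^ 6 + 2 * s ^ 4 + s ^ 3 + 2 * s ^ 2 + s) * h2
  linear_combination (s ^ 5 + s + s ^ 256) * e8 + s * hq + (s ^ 6 + s ^ 2) * h2

private lemma gf_contra {n : ℕ} (hn : 1 ≤ n) (h9 : ¬ (9 ∣ n)) (h2 : (2 : K) = 0)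
    (hpow : ∀ x : K, x ^ (2 ^ n) = x) (s : K) (hq : s ^ 9 = s + 1) : False := by
  have e9 : s ^ (2 ^ 9) = s := by
    have := gf_chain s h2 hq
    norm_num
    exact this
  obtain ⟨A, B, hAB⟩ : ∃ A B : ℕ, 9 * A = Nat.gcd 9 n + n * B := by
    have hbz : ((Nat.gcd 9 n : ℕ) : ℤ) = 9 * Nat.gcdA 9 n + n * Nat.gcdB 9 n :=
      Nat.gcd_eq_gcd_ab 9 n
    set a : ℤ := Nat.gcdA 9 n
    set b : ℤ := Nat.gcdB 9 n
    set k : ℤ := |a| + |b| + 1 with hk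
    have hk0 : 0 ≤ k := by positivity
    have hA0 : 0 ≤ a + k * n := by
      have h1 : (1 : ℤ) ≤ (n : ℤ) := by exact_mod_cast hn
      nlinarith [neg_abs_le a, abs_nonneg a, abs_nonneg b]
    have hB0 : 0 ≤ 9 * k - b := by
      nlinarith [le_abs_self b, abs_nonneg a, abs_nonneg b]
    refine ⟨(a + k * n).toNat, (9 * k - b).toNat, ?_⟩
    have : (9 * ((a + k * n).toNat : ℤ)) = (Nat.gcd 9 n : ℤ) + n * ((9 * k - b).toNat : ℤ) := by
      rw [Int.toNat_of_nonneg hA0, Int.toNat_of_nonneg hB0]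
      linear_combination -hbz
    exact_mod_cast this
  have hsd : s ^ (2 ^ Nat.gcd 9 n) = s := by
    calc s ^ (2 ^ Nat.gcd 9 n) = (s ^ (2 ^ Nat.gcd 9 n)) ^ (2 ^ (n * B)) :=
        (gf_iter_pow _ n (hpow _) B).symm
      _ = s ^ (2 ^ (9 * A)) := by rw [← pow_mul, ← pow_add, hAB]
      _ = s := gf_iter_pow s 9 e9 A
  have hd9 : Nat.gcd 9 n ∣ 9 := Nat.gcd_dvd_left 9 n
  have hdn : Nat.gcd 9 n ∣ n := Nat.gcd_dvd_right 9 n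
  have hdne : Nat.gcd 9 n ≠ 9 := fun h => h9 (h ▸ hdn)
  have h8 : s ^ 8 = s := by
    have hd13 : Nat.gcd 9 n = 1 ∨ Nat.gcd 9 n = 3 := by
      set d := Nat.gcd 9 n
      clear_value d
      have hdle : d ≤ 9 := Nat.le_of_dvd (by norm_num) hd9
      interval_cases d <;> revert hd9 hdne <;> decide
    rcases hd13 with h | h
    · rw [h] at hsd
      norm_num at hsd
      linear_combination (s ^ 6 + s ^ 5 + s ^ 4 + s ^ 3 + s ^ 2 + s + 1) * hsd
    · rw [h] at hsd
      norm_num at hsd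
      exact hsd
  have hone : (1 : K) = 0 := by
    linear_combination (s ^ 6 + s ^ 5 + s ^ 3 + s ^ 2 + 1) * hq +
      (s ^ 7 + s ^ 6 + s ^ 4 + s ^ 3 + s + 1) * h8 +
      (-s ^ 15 - s ^ 14 - s ^ 12 - s ^ 11 - s ^ 9 + s ^ 7 + s ^ 6 + s ^ 5 + s ^ 4 + s ^ 3 +
        s ^ 2 + s + 1) * h2
  exact one_ne_zero hone

end aux

set_option maxRecDepth 100000 in
theorem stmt_4 (n : ℕ) (hn : 1 ≤ n) :
    (∀ u v : GaloisField 2 n,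
        ((0 : GaloisField 2 n) ^ 9)⁻¹ + (u ^ 9)⁻¹ + (v ^ 9)⁻¹ + ((u + v) ^ 9)⁻¹ = 0 →
          u * v * (u + v) = 0) ↔ ¬ (9 ∣ n) := by
  have h2 : (2 : GaloisField 2 n) = 0 := by
    exact_mod_cast CharP.cast_eq_zero (GaloisField 2 n) 2
  have hFin : Fintype (GaloisField 2 n) := Fintype.ofFinite _
  have hcard : Fintype.card (GaloisField 2 n) = 2 ^ n := by
    rw [← Nat.card_eq_fintype_card]
    exact GaloisField.card 2 n (by omega)
  have hpow : ∀ x : GaloisField 2 n, x ^ (2 ^ n) = x := by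
    intro x
    rw [← hcard]
    exact FiniteField.pow_card x
  constructor
  · -- 0-APN implies ¬ 9 ∣ n
    intro hapn h9n
    obtain ⟨t, ht⟩ : ∃ t : GaloisField 2 n, t ^ 9 + t + 1 = 0 := by
      have h2P : (2 : (ZMod 2)[X]) = 0 := by
        exact_mod_cast CharP.cast_eq_zero ((ZMod 2)[X]) 2
      set q : (ZMod 2)[X] := X ^ 9 + X + 1 with hq
      have d3 : q ∣ X ^ (8 : ℕ) - X ^ (8:ℕ) := by simp
      have step : ∀ (m : ℕ) (r r' c mm : (ZMod 2)[X]), q ∣ X ^ m - r →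
          (r * r - r' = q * c + 2 * mm) → q ∣ X ^ (2 * m) - r' := by
        intro m r r' c mm h he
        have h1 : q ∣ (X ^ m - r) * (X ^ m + r) := h.mul_right _
        have h2' : (X ^ m - r) * (X ^ m + r) = X ^ (2 * m) - r * r := by ring
        rw [h2'] at h1
        have h3 : q ∣ r * r - r' := by
          refine ⟨c, ?_⟩
          rw [he, h2P]
          ring
        have := dvd_add h1 h3
        rwa [show X ^ (2 * m) - r * r + (r * r - r') = X ^ (2 * m) - r' by ring] at this
      have d4 : q ∣ X ^ (16 : ℕ) - (X ^ 8 + X ^ 7) := by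
        refine step 8 (X ^ 8) _ (X ^ 7) (-X ^ 8 - X ^ 7) d3 (by ring)
      have d5 : q ∣ X ^ (32 : ℕ) - (X ^ 8 + X ^ 7 + X ^ 6 + X ^ 5) := by
        refine step 16 _ _ (X ^ 7 + 2 * X ^ 6 + X ^ 5)
          (-X ^ 8 - 2 * X ^ 7 - 2 * X ^ 6 - X ^ 5) d4 (by ring)
      have d6 : q ∣ X ^ (64 : ℕ) -
          (X ^ 8 + X ^ 7 + X ^ 6 + X ^ 5 + X ^ 4 + X ^ 3 + X ^ 2 + X) := by
        refine step 32 _ _ (X ^ 7 + 2 * X ^ 6 + 3 * X ^ 5 + 4 * X ^ 4 + 3 * X ^ 3 +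
          2 * X ^ 2 + X) (-X ^ 8 - 2 * X ^ 7 - 3 * X ^ 6 - 4 * X ^ 5 - 4 * X ^ 4 -
          3 * X ^ 3 - 2 * X ^ 2 - X) d5 (by ring)
      have d7 : q ∣ X ^ (128 : ℕ) - (X ^ 7 + X ^ 5 + X ^ 3 + X) := by
        refine step 64 _ _ (X ^ 7 + 2 * X ^ 6 + 3 * X ^ 5 + 4 * X ^ 4 + 5 * X ^ 3 +
          6 * X ^ 2 + 7 * X + 8) (3 * X ^ 8 + X ^ 7 - 2 * X ^ 5 - 3 * X ^ 4 - 5 * X ^ 3 -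
          6 * X ^ 2 - 8 * X - 4) d6 (by ring)
      have d8 : q ∣ X ^ (256 : ℕ) - (X ^ 5 + X) := by
        refine step 128 _ _ (X ^ 5 + 2 * X ^ 3 + 3 * X)
          (2 * X ^ 8 + X ^ 6 - X ^ 5 - X ^ 3 - X ^ 2 - 2 * X) d7 (by ring)
      have d9 : q ∣ X ^ (512 : ℕ) - X := by
        refine step 256 _ _ X (X ^ 6 - X) d8 (by ring)
      obtain ⟨m, hm⟩ := h9n
      have h511 : (511 : ℕ) ∣ 2 ^ n - 1 := by
        have := Nat.sub_dvd_pow_sub_pow (2 ^ 9) 1 m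
        rw [hm, pow_mul]
        simpa using this
      obtain ⟨c, hc⟩ := h511
      have hdvd2 : (X ^ (512 : ℕ) - X : (ZMod 2)[X]) ∣ X ^ (2 ^ n) - X := by
        have hx : (X ^ (511 : ℕ) - 1 : (ZMod 2)[X]) ∣ X ^ (2 ^ n - 1) - 1 := by
          rw [hc, pow_mul]
          simpa using sub_dvd_pow_sub_pow (X ^ (511:ℕ) : (ZMod 2)[X]) 1 c
        have h1 : (X ^ (512 : ℕ) - X : (ZMod 2)[X]) = X * (X ^ (511 : ℕ) - 1) := by ring
        have h2' : (X ^ (2 ^ n) - X : (ZMod 2)[X]) = X * (X ^ (2 ^ n - 1) - 1) := by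
          have hxx : X * (X ^ (2 ^ n - 1) : (ZMod 2)[X]) = X ^ (2 ^ n) := by
            rw [← pow_succ']
            congr 1
            have := Nat.one_le_two_pow (n := n)
            omega
          rw [mul_sub, hxx, mul_one]
        rw [h1, h2']
        exact mul_dvd_mul_left _ hx
      have hqd : q ∣ (X ^ (2 ^ n) - X : (ZMod 2)[X]) := d9.trans hdvd2
      have hsplits : Splits ((X ^ (2 ^ n) - X : (ZMod 2)[X]).map
          (algebraMap (ZMod 2) (GaloisField 2 n))) :=
        SplittingField.splits (X ^ 2 ^ n - X : (ZMod 2)[X])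
      have hne0 : (X ^ (2 ^ n) - X : (ZMod 2)[X]) ≠ 0 :=
        FiniteField.X_pow_card_pow_sub_X_ne_zero (ZMod 2) (n := n) (p := 2)
          (by omega) (by norm_num)
      have hqsplits : Splits (q.map (algebraMap (ZMod 2) (GaloisField 2 n))) :=
        hsplits.of_dvd ((Polynomial.map_ne_zero_iff
          (algebraMap (ZMod 2) (GaloisField 2 n)).injective).mpr hne0) (Polynomial.map_dvd _ hqd)
      have hdeg : q.degree ≠ 0 := by
        have hdq : q.degree = 9 := by
          rw [hq]
          compute_degree!
        rw [hdq]
        norm_num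
      obtain ⟨t, ht⟩ := hqsplits.exists_eval_eq_zero (by rwa [degree_map])
      rw [eval_map] at ht
      refine ⟨t, ?_⟩
      have heval : eval₂ (algebraMap (ZMod 2) (GaloisField 2 n)) t q = t ^ 9 + t + 1 := by
        rw [hq]
        simp [eval₂_add, eval₂_pow]
      rwa [heval] at ht
    have ht9 : t ^ 9 = t + 1 := by linear_combination ht - (t + 1) * h2
    have ht0 : t ≠ 0 := by
      intro h
      rw [h] at ht9
      norm_num at ht9
    have ht1 : (1 : GaloisField 2 n) + t ≠ 0 := by
      intro h
      have hz : t ^ 9 = 0 := by rw [ht9]; linear_combination h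
      exact ht0 (pow_eq_zero_iff (by norm_num) |>.mp hz)
    have h8t : (1 + t) ^ 9 = t ^ 8 := by
      linear_combination ht9 + (4 * t ^ 8 + 18 * t ^ 7 + 42 * t ^ 6 + 63 * t ^ 5 +
        63 * t ^ 4 + 42 * t ^ 3 + 18 * t ^ 2 + 5 * t + 1) * h2
    have hsum : ((0 : GaloisField 2 n) ^ 9)⁻¹ + ((1 : GaloisField 2 n) ^ 9)⁻¹ + (t ^ 9)⁻¹ +
        (((1 : GaloisField 2 n) + t) ^ 9)⁻¹ = 0 := by
      rw [h8t, ht9, show ((0 : GaloisField 2 n) ^ 9) = 0 from zero_pow (by norm_num),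
        inv_zero, one_pow, inv_one, zero_add]
      have ht1' : t + 1 ≠ 0 := by rwa [add_comm] at ht1
      have ht8 : t ^ 8 ≠ 0 := pow_ne_zero _ ht0
      field_simp
      linear_combination (-1 : GaloisField 2 n) * ht9 + (t ^ 9 + t ^ 8) * h2
    have hres := hapn 1 t hsum
    rw [one_mul] at hres
    rcases mul_eq_zero.mp hres with h | h
    · exact ht0 h
    · exact ht1 h
  · -- ¬ 9 ∣ n implies 0-APN
    intro h9 u v hsum
    by_contra hne
    simp only [mul_eq_zero, not_or] at hne
    obtain ⟨⟨hu, hv⟩, huv⟩ := hne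
    rw [show ((0 : GaloisField 2 n) ^ 9) = 0 from zero_pow (by norm_num), inv_zero,
      zero_add] at hsum
    have h9u : u ^ 9 ≠ 0 := pow_ne_zero _ hu
    have h9v : v ^ 9 ≠ 0 := pow_ne_zero _ hv
    have h9uv : (u + v) ^ 9 ≠ 0 := pow_ne_zero _ huv
    field_simp at hsum
    have hQ : (v ^ 9 + v * u ^ 8 + u ^ 9) * (v ^ 9 + v ^ 8 * u + u ^ 9) = 0 := by
      linear_combination hsum +
        ((-4) * u ^ 17 * v + (-18) * u ^ 16 * v ^ 2 + (-42) * u ^ 15 * v ^ 3 +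
          (-63) * u ^ 14 * v ^ 4 + (-63) * u ^ 13 * v ^ 5 + (-42) * u ^ 12 * v ^ 6 +
          (-18) * u ^ 11 * v ^ 7 + (-4) * u ^ 10 * v ^ 8 + (-4) * u ^ 8 * v ^ 10 +
          (-18) * u ^ 7 * v ^ 11 + (-42) * u ^ 6 * v ^ 12 + (-63) * u ^ 5 * v ^ 13 +
          (-63) * u ^ 4 * v ^ 14 + (-42) * u ^ 3 * v ^ 15 + (-18) * u ^ 2 * v ^ 16 +
          (-4) * u * v ^ 17) * h2
    rcases mul_eq_zero.mp hQ with h | h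
    · have hs : (v * u⁻¹) ^ 9 = v * u⁻¹ + 1 := by
        field_simp
        linear_combination h - (v * u ^ 8 + u ^ 9) * h2
      exact gf_contra hn h9 h2 hpow (v * u⁻¹) hs
    · have hs : (u * v⁻¹) ^ 9 = u * v⁻¹ + 1 := by
        field_simp
        linear_combination h - (u * v ^ 8 + v ^ 9) * h2
      exact gf_contra hn h9 h2 hpow (u * v⁻¹) hs
end

section
/- Let k be a positive integer with 3 ∤ k and n = 2k. Then the power function f(x) = x^{3(2^k − 1)} is 0-APN over 𝔽_{2^n}: the equation (x+1)^{3(2^k−1)} + x^{3(2^k−1)} + 1 = 0 has no solution in 𝔽_{2^n} \ 𝔽_2. -/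
private lemma aux_seven {F : Type*} [Field F] (k : ℕ) (hk : 1 ≤ k) (h3 : ¬ (3 ∣ k))
    (h2 : (2 : F) = 0) (a : F) (ha : a ^ 2 ^ k = a) (ha7 : a ^ 7 = 1)
    (ha1 : a ≠ 1) (ha3 : a ^ 3 ≠ 1) : False := by
  have h1 : 1 ≤ 2 ^ k := Nat.one_le_two_pow
  have ha0 : a ≠ 0 := by
    rintro rfl
    simp at ha7
  have hc : a ^ (2 ^ k - 1) = 1 := by
    have h : a ^ (2 ^ k - 1) * a = 1 * a := by
      rw [one_mul, ← pow_succ, show 2 ^ k - 1 + 1 = 2 ^ k from by omega]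
      exact ha
    exact mul_right_cancel₀ ha0 h
  have hsplit : a ^ ((2 ^ k - 1) % 7) = 1 := by
    rw [show 2 ^ k - 1 = 7 * ((2 ^ k - 1) / 7) + (2 ^ k - 1) % 7 from
      (Nat.div_add_mod _ 7).symm, pow_add, pow_mul, ha7, one_pow, one_mul] at hc
    exact hc
  have hk3 : k % 3 = 1 ∨ k % 3 = 2 := by omega
  have hpow : 2 ^ k % 7 = 2 ^ (k % 3) % 7 := by
    conv_lhs => rw [show k = 3 * (k / 3) + k % 3 from (Nat.div_add_mod k 3).symm]
    rw [pow_add, pow_mul, Nat.mul_mod, Nat.pow_mod]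
    norm_num
  have hmod : (2 ^ k - 1) % 7 = 1 ∨ (2 ^ k - 1) % 7 = 3 := by
    rcases hk3 with h | h <;> rw [h] at hpow <;> norm_num at hpow <;> omega
  rcases hmod with h | h <;> rw [h] at hsplit
  · exact ha1 (by rwa [pow_one] at hsplit)
  · exact ha3 hsplit

theorem stmt_8 (k n : ℕ) (hk : 1 ≤ k) (h3 : ¬ (3 ∣ k)) (hn : n = 2 * k) :
    ¬ ∃ x : GaloisField 2 n, x ≠ 0 ∧ x ≠ 1 ∧
      (x + 1) ^ (3 * (2 ^ k - 1)) + x ^ (3 * (2 ^ k - 1)) + 1 = 0 := by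
  rintro ⟨x, hx0, hx1, hE⟩
  have h2 : (2 : GaloisField 2 n) = 0 := by
    have := CharP.cast_eq_zero (GaloisField 2 n) 2
    simpa using this
  have hq1 : 1 ≤ 2 ^ k := Nat.one_le_two_pow
  obtain ⟨s, hs⟩ : ∃ s : GaloisField 2 n, s = x ^ 2 ^ k := ⟨_, rfl⟩
  haveI : Fintype (GaloisField 2 n) := Fintype.ofFinite _
  have hcard : Fintype.card (GaloisField 2 n) = 2 ^ n := by
    rw [← Nat.card_eq_fintype_card]
    exact GaloisField.card 2 n (by omega)
  have hxq2 : s ^ 2 ^ k = x := by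
    rw [hs, ← pow_mul, show 2 ^ k * 2 ^ k = 2 ^ n from by rw [hn, two_mul, pow_add],
      ← hcard]
    exact FiniteField.pow_card x
  have hX1 : x + 1 ≠ 0 := by
    intro h
    exact hx1 (by linear_combination h - h2)
  -- transformed equation
  have hE' : (s + 1) ^ 3 * x ^ 3 + s ^ 3 * (x + 1) ^ 3 + x ^ 3 * (x + 1) ^ 3 = 0 := by
    have hs1 : (x + 1) ^ 2 ^ k = s + 1 := by
      rw [add_pow_char_pow, one_pow, ← hs]
    have e1 : (x + 1) ^ (3 * (2 ^ k - 1)) * (x + 1) ^ 3 = (s + 1) ^ 3 := by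
      rw [← pow_add, show 3 * (2 ^ k - 1) + 3 = 2 ^ k * 3 from by omega, pow_mul, hs1]
    have e2 : x ^ (3 * (2 ^ k - 1)) * x ^ 3 = s ^ 3 := by
      rw [← pow_add, show 3 * (2 ^ k - 1) + 3 = 2 ^ k * 3 from by omega, pow_mul, ← hs]
    linear_combination (x ^ 3 * (x + 1) ^ 3) * hE - x ^ 3 * e1 - (x + 1) ^ 3 * e2
  rcases eq_or_ne s x with hsx | hsx
  · -- x in the subfield: direct contradiction
    rw [hsx] at hE'
    have hz : x ^ 3 * (x + 1) ^ 3 = 0 := by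
      linear_combination hE' - x ^ 3 * (x + 1) ^ 3 * h2
    rcases mul_eq_zero.mp hz with h | h
    · exact hx0 ((pow_eq_zero_iff (n := 3) (by norm_num)).mp h)
    · exact hX1 ((pow_eq_zero_iff (n := 3) (by norm_num)).mp h)
  · -- x outside the subfield
    -- Frobenius-fixedness of symmetric expressions
    have hφ : ∀ c : GaloisField 2 n, c ^ 2 ^ k = c ↔ (iterateFrobenius (GaloisField 2 n) 2 k) c = c := by
      intro c; rw [iterateFrobenius_def]
    have hφx : (iterateFrobenius (GaloisField 2 n) 2 k) x = s := by
      rw [iterateFrobenius_def, ← hs]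
    have hφs : (iterateFrobenius (GaloisField 2 n) 2 k) s = x := by
      rw [iterateFrobenius_def, hxq2]
    -- the linear relation c1 * x + c0 = 0
    have hlin :
        ((x + s + 1) * ((x * s) ^ 2 + (x * s) * (x + s + 1) + (x + s) ^ 2 * (x + s + 1) ^ 2)) * x
        + ((x * s) ^ 3 + (x * s) ^ 2 * ((x + s) ^ 2 + (x + s) + 1)
            + (x * s) * ((x + s) ^ 4 + (x + s) ^ 3) + (x + s) ^ 3) = 0 := by
      linear_combination hE' + (2 * x * s ^ 2 + 2 * x * s ^ 4 + x * s ^ 5 + 3 * x ^ 2 * s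
        + 6 * x ^ 2 * s ^ 2 + 7 * x ^ 2 * s ^ 3 + 5 * x ^ 2 * s ^ 4 + 4 * x ^ 3 * s
        + 11 * x ^ 3 * s ^ 2 + 9 * x ^ 3 * s ^ 3 + 7 * x ^ 4 * s + 8 * x ^ 4 * s ^ 2
        + 3 * x ^ 5 * s) * h2
    have hc1fix :
        ((x + s + 1) * ((x * s) ^ 2 + (x * s) * (x + s + 1) + (x + s) ^ 2 * (x + s + 1) ^ 2))
          ^ 2 ^ k
        = (x + s + 1) * ((x * s) ^ 2 + (x * s) * (x + s + 1) + (x + s) ^ 2 * (x + s + 1) ^ 2) := by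
      rw [hφ]
      simp only [map_add, map_mul, map_pow, map_one, hφx, hφs]
      ring
    have hc0fix :
        ((x * s) ^ 3 + (x * s) ^ 2 * ((x + s) ^ 2 + (x + s) + 1)
            + (x * s) * ((x + s) ^ 4 + (x + s) ^ 3) + (x + s) ^ 3) ^ 2 ^ k
        = (x * s) ^ 3 + (x * s) ^ 2 * ((x + s) ^ 2 + (x + s) + 1)
            + (x * s) * ((x + s) ^ 4 + (x + s) ^ 3) + (x + s) ^ 3 := by
      rw [hφ]
      simp only [map_add, map_mul, map_pow, map_one, hφx, hφs]
      ring
    have hxq_ne : x ^ 2 ^ k ≠ x := by rw [← hs]; exact hsx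
    have hc1z :
        (x + s + 1) * ((x * s) ^ 2 + (x * s) * (x + s + 1) + (x + s) ^ 2 * (x + s + 1) ^ 2)
          = 0 := by
      by_contra hc
      set c1 := (x + s + 1) * ((x * s) ^ 2 + (x * s) * (x + s + 1)
        + (x + s) ^ 2 * (x + s + 1) ^ 2) with hdefc1
      set c0 := (x * s) ^ 3 + (x * s) ^ 2 * ((x + s) ^ 2 + (x + s) + 1)
        + (x * s) * ((x + s) ^ 4 + (x + s) ^ 3) + (x + s) ^ 3 with hdefc0
      have hmul : c1 * x = c0 := by linear_combination hlin - c0 * h2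
      have hxv : x = c1⁻¹ * c0 := by
        have h := congrArg (fun t => c1⁻¹ * t) hmul
        simpa [← mul_assoc, inv_mul_cancel₀ hc] using h
      apply hxq_ne
      rw [hxv, mul_pow, inv_pow, hc1fix, hc0fix]
    have hc0z : (x * s) ^ 3 + (x * s) ^ 2 * ((x + s) ^ 2 + (x + s) + 1)
        + (x * s) * ((x + s) ^ 4 + (x + s) ^ 3) + (x + s) ^ 3 = 0 := by
      linear_combination hlin - x * hc1z
    have hNfix : (x * s) ^ 2 ^ k = x * s := by
      rw [hφ]; simp only [map_mul, hφx, hφs]; ring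
    have hTfix : (x + s) ^ 2 ^ k = x + s := by
      rw [hφ]; simp only [map_add, hφx, hφs]; ring
    have hTne : x + s ≠ 0 := by
      intro h
      exact hsx (by linear_combination h - x * h2)
    rcases eq_or_ne (x + s) 1 with hT1 | hT1
    · -- N^3 + N^2 + 1 = 0
      rw [hT1] at hc0z
      have hN : (x * s) ^ 3 + (x * s) ^ 2 + 1 = 0 := by
        linear_combination hc0z - ((x * s) ^ 2 + x * s) * h2
      have ha7 : (x * s) ^ 7 = 1 := by
        linear_combination ((x * s) ^ 4 + (x * s) ^ 3 + (x * s) ^ 2 + 1) * hN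
          - (1 + (x * s) ^ 2 + (x * s) ^ 3 + (x * s) ^ 4 + (x * s) ^ 5 + (x * s) ^ 6) * h2
      refine aux_seven k hk h3 h2 (x * s) hNfix ha7 ?_ ?_
      · intro h1
        rw [h1] at hN
        exact one_ne_zero (show (1 : GaloisField 2 n) = 0 by linear_combination hN - h2)
      · intro h1
        have ha2 : (x * s) ^ 2 = 0 := by linear_combination hN - h1 - h2
        have := (pow_eq_zero_iff (two_ne_zero)).mp ha2
        rw [this] at hN
        exact one_ne_zero (by linear_combination hN)
    · -- T ∉ {0,1}
      have hT1' : x + s + 1 ≠ 0 := by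
        intro h
        exact hT1 (by linear_combination h - h2)
      have hI : (x * s) ^ 2 + (x * s) * (x + s + 1) + (x + s) ^ 2 * (x + s + 1) ^ 2 = 0 :=
        (mul_eq_zero.mp hc1z).resolve_left hT1'
      have hR : (x + s) ^ 3 * ((x + s) ^ 3 + (x + s) + 1) = 0 := by
        linear_combination hc0z - ((x * s) + (x + s) ^ 2) * hI
          + (s ^ 4 + s ^ 5 + s ^ 6 + 5 * x * s ^ 3 + 6 * x * s ^ 4 + 6 * x * s ^ 5
            + 8 * x ^ 2 * s ^ 2 + 13 * x ^ 2 * s ^ 3 + 15 * x ^ 2 * s ^ 4 + 5 * x ^ 3 * s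
            + 13 * x ^ 3 * s ^ 2 + 20 * x ^ 3 * s ^ 3 + x ^ 4 + 6 * x ^ 4 * s
            + 15 * x ^ 4 * s ^ 2 + x ^ 5 + 6 * x ^ 5 * s + x ^ 6) * h2
      have hT : (x + s) ^ 3 + (x + s) + 1 = 0 := by
        rcases mul_eq_zero.mp hR with h | h
        · exact absurd ((pow_eq_zero_iff (n := 3) (by norm_num)).mp h) hTne
        · exact h
      have ha7 : (x + s) ^ 7 = 1 := by
        linear_combination ((x + s) ^ 4 + (x + s) ^ 2 + (x + s) + 1) * hT
          - (1 + (x + s) + (x + s) ^ 2 + (x + s) ^ 3 + (x + s) ^ 4 + (x + s) ^ 5) * h2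
      refine aux_seven k hk h3 h2 (x + s) hTfix ha7 ?_ ?_
      · intro h1
        rw [h1] at hT
        exact one_ne_zero (show (1 : GaloisField 2 n) = 0 by linear_combination hT - h2)
      · intro h1
        have ha0 : x + s = 0 := by linear_combination hT - h1 - h2
        exact hTne ha0
end

section
/- Let n = 2k+1 and k ≡ 1 (mod 3). If x ∈ 𝔽_{2^n} satisfies x^{2^k} = x^2 and x^{2^{k+1}+9} + x^{2^k+9} + x^9 + x^{3·2^k+8} + x^{2^{k+1}+8} + x^{2^k+8} + x^{3·2^k+1} + x^{16} = 0, then x ∈ 𝔽_2. -/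
theorem stmt_15 (k n : ℕ) (hk : k % 3 = 1) (hn : n = 2 * k + 1) (x : GaloisField 2 n)
    (hfrob : x ^ 2 ^ k = x ^ 2)
    (hx : x ^ (2 ^ (k + 1) + 9) + x ^ (2 ^ k + 9) + x ^ 9 + x ^ (3 * 2 ^ k + 8) +
        x ^ (2 ^ (k + 1) + 8) + x ^ (2 ^ k + 8) + x ^ (3 * 2 ^ k + 1) + x ^ 16 = 0) :
    x = 0 ∨ x = 1 := by
  have h2 : (2 : GaloisField 2 n) = 0 := by
    exact_mod_cast CharP.cast_eq_zero (GaloisField 2 n) 2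
  -- x ^ (2^n) = x
  have hcard : x ^ (2 : ℕ) ^ n = x := by
    haveI : Fintype (GaloisField 2 n) := Fintype.ofFinite _
    have h := FiniteField.pow_card x
    rwa [← Nat.card_eq_fintype_card, GaloisField.card 2 n (by omega)] at h
  have h8 : x ^ 8 = x := by
    have hexp : (2 : ℕ) ^ n = 2 ^ (k + 1) * 2 ^ k := by
      rw [← pow_add]; congr 1; omega
    have h4 : x ^ 2 ^ (k + 1) = x ^ 4 := by rw [pow_succ, pow_mul, hfrob]; ring
    rw [hexp, pow_mul, h4, ← pow_mul, mul_comm 4 (2 ^ k), pow_mul, hfrob] at hcard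
    calc x ^ 8 = (x ^ 2) ^ 4 := by ring
    _ = x := hcard
  -- rewrite the exponents in hx using hfrob
  have e1 : x ^ (2 ^ (k + 1) + 9) = x ^ 13 := by
    rw [pow_add, pow_succ, pow_mul, hfrob]; ring
  have e2 : x ^ (2 ^ k + 9) = x ^ 11 := by
    rw [pow_add, hfrob]; ring
  have e3 : x ^ (3 * 2 ^ k + 8) = x ^ 14 := by
    rw [pow_add, mul_comm 3 (2 ^ k), pow_mul, hfrob]; ring
  have e4 : x ^ (2 ^ (k + 1) + 8) = x ^ 12 := by
    rw [pow_add, pow_succ, pow_mul, hfrob]; ring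
  have e5 : x ^ (2 ^ k + 8) = x ^ 10 := by
    rw [pow_add, hfrob]; ring
  have e6 : x ^ (3 * 2 ^ k + 1) = x ^ 7 := by
    rw [pow_add, mul_comm 3 (2 ^ k), pow_mul, hfrob]; ring
  rw [e1, e2, e3, e4, e5, e6] at hx
  have key : x ^ 3 * (x + 1) ^ 3 = 0 := by
    linear_combination hx + (-(x ^ 8 + x ^ 6 + x ^ 5 + x ^ 4 + x ^ 3 + x ^ 2 + 2 * x)) * h8 +
      (x ^ 4 + x ^ 5 - x ^ 7 - x ^ 2) * h2
  rcases mul_eq_zero.mp key with h | h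
  · left
    exact pow_eq_zero_iff (by norm_num) |>.mp h
  · right
    have hx1 : x + 1 = 0 := pow_eq_zero_iff (n := 3) (by norm_num) |>.mp h
    linear_combination hx1 - h2
end

section
/- Let n = 2k+1 with k ≢ 13 (mod 27). If x ∈ 𝔽_{2^n} is a root of (x^{27} + x^{22} + x^{20} + x^{19} + x^{15} + x^{13} + x^{12} + x^9 + x^5 + x^3 + x^2 + x + 1)·(x^{27} + x^{26} + x^{25} + x^{24} + x^{22} + x^{18} + x^{15} + x^{14} + x^{12} + x^8 + x^7 + x^5 + 1), then a contradiction arises; i.e., neither degree-27 factor has a root in 𝔽_{2^n}. -/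
set_option maxHeartbeats 4000000 in
theorem stmt_17 (k n : ℕ) (h27 : k % 27 ≠ 13) (hn : n = 2 * k + 1)
    (x : GaloisField 2 n)
    (hx : (x ^ 27 + x ^ 22 + x ^ 20 + x ^ 19 + x ^ 15 + x ^ 13 + x ^ 12 + x ^ 9 +
          x ^ 5 + x ^ 3 + x ^ 2 + x + 1) *
        (x ^ 27 + x ^ 26 + x ^ 25 + x ^ 24 + x ^ 22 + x ^ 18 + x ^ 15 + x ^ 14 +
          x ^ 12 + x ^ 8 + x ^ 7 + x ^ 5 + 1) = 0) : False := by
  haveI : Fact (Nat.Prime 2) := ⟨Nat.prime_two⟩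
  have h2 : (2 : GaloisField 2 n) = 0 := by
    have := CharP.cast_eq_zero (GaloisField 2 n) 2
    exact_mod_cast this
  haveI : Fintype (GaloisField 2 n) := Fintype.ofFinite _
  have hcard : Fintype.card (GaloisField 2 n) = 2 ^ n := by
    rw [← Nat.card_eq_fintype_card]; exact GaloisField.card 2 n (by omega)
  have hxn : x ^ 2 ^ n = x := by rw [← hcard]; exact FiniteField.pow_card x
  have key : ∀ y : GaloisField 2 n, y ^ 134217728 = y → y ^ 2 ^ n = y → y ^ 512 = y := by
    intro y hy27 hyn
    have hp27 : Function.IsPeriodicPt (frobenius (GaloisField 2 n) 2) 27 y := by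
      show (frobenius (GaloisField 2 n) 2)^[27] y = y
      rw [iterate_frobenius]
      norm_num
      exact hy27
    have hpn : Function.IsPeriodicPt (frobenius (GaloisField 2 n) 2) n y := by
      show (frobenius (GaloisField 2 n) 2)^[n] y = y
      rw [iterate_frobenius]
      exact hyn
    have hg := hp27.gcd hpn
    have hg9 : Nat.gcd 27 n ∣ 9 := by
      have hd27 := Nat.gcd_dvd_left 27 n
      have hdn := Nat.gcd_dvd_right 27 n
      have h27n : ¬ (27 ∣ n) := by omega
      rcases (Nat.dvd_prime_pow Nat.prime_three).mp
        (show Nat.gcd 27 n ∣ 3 ^ 3 by exact_mod_cast hd27) with ⟨i, hi, hgi⟩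
      interval_cases i
      · rw [hgi]; decide
      · rw [hgi]; decide
      · rw [hgi]; decide
      · exfalso; rw [hgi] at hdn; norm_num at hdn; exact h27n hdn
    obtain ⟨c, hc⟩ := hg9
    have hp9 : Function.IsPeriodicPt (frobenius (GaloisField 2 n) 2) 9 y := by
      rw [hc]; exact hg.mul_const c
    have := hp9
    rw [Function.IsPeriodicPt, Function.IsFixedPt, iterate_frobenius] at this
    norm_num at this
    exact this
  rcases mul_eq_zero.mp hx with hP | hP
  · have s1 : x ^ 2 = x ^ 2 := rfl
    have s2 : x ^ 4 = (x ^ 4) := by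
      linear_combination (2 * x ^ 2) * s1
    have s3 : x ^ 8 = (x ^ 8) := by
      linear_combination (2 * x ^ 4) * s2
    have s4 : x ^ 16 = (x ^ 16) := by
      linear_combination (2 * x ^ 8) * s3
    have s5 : x ^ 32 = (x ^ 25 + x ^ 24 + x ^ 22 + x ^ 19 + x ^ 18 + x ^ 17 + x ^ 15 + x ^ 14 + x ^ 13 + x ^ 12 + x ^ 10 + x ^ 9 + x ^ 8 + x ^ 7 + x ^ 6 + x ^ 3 + x ^ 2 + x + 1) := by
      linear_combination (2 * x ^ 16) * s4 + (x ^ 5 + 1) * hP + (-1 * x ^ 27 + -1 * x ^ 25 + -1 * x ^ 24 + -1 * x ^ 22 + -1 * x ^ 20 + -1 * x ^ 19 + -1 * x ^ 18 + -1 * x ^ 17 + -1 * x ^ 15 + -1 * x ^ 14 + -1 * x ^ 13 + -1 * x ^ 12 + -1 * x ^ 10 + -1 * x ^ 9 + -1 * x ^ 8 + -1 * x ^ 7 + -1 * x ^ 6 + -1 * x ^ 5 + -1 * x ^ 3 + -1 * x ^ 2 + -1 * x + -1) * h2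
    have s6 : x ^ 64 = (x ^ 26 + x ^ 23 + x ^ 21 + x ^ 20 + x ^ 17 + x ^ 15 + x ^ 10 + x ^ 9 + x ^ 5 + x ^ 4 + x ^ 3 + x ^ 2 + x) := by
      linear_combination (x ^ 32 + x ^ 25 + x ^ 24 + x ^ 22 + x ^ 19 + x ^ 18 + x ^ 17 + x ^ 15 + x ^ 14 + x ^ 13 + x ^ 12 + x ^ 10 + x ^ 9 + x ^ 8 + x ^ 7 + x ^ 6 + x ^ 3 + x ^ 2 + x + 1) * s5 + (x ^ 23 + x ^ 21 + x ^ 18 + x ^ 17 + x ^ 15 + x ^ 14 + x ^ 12 + x ^ 11 + x ^ 10 + x ^ 9 + x ^ 7 + x ^ 3 + x ^ 2 + 1) * hP + (x ^ 49 + x ^ 47 + x ^ 46 + -1 * x ^ 45 + x ^ 44 + x ^ 43 + x ^ 42 + x ^ 41 + x ^ 40 + 2 * x ^ 39 + x ^ 38 + 2 * x ^ 37 + x ^ 36 + 2 * x ^ 35 + 2 * x ^ 34 + 2 * x ^ 33 + 4 * x ^ 32 + 4 * x ^ 31 + x ^ 30 + x ^ 29 + 4 * x ^ 28 + 4 * x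 ^ 27 + 3 * x ^ 26 + 6 * x ^ 25 + 3 * x ^ 24 + x ^ 23 + 2 * x ^ 22 + 3 * x ^ 21 + 3 * x ^ 20 + 3 * x ^ 19 + 3 * x ^ 18 + 2 * x ^ 17 + 3 * x ^ 16 + 2 * x ^ 15 + 2 * x ^ 14 + 2 * x ^ 13 + x ^ 11 + 2 * x ^ 10 + 2 * x ^ 9 + 2 * x ^ 8 + x ^ 7 + x ^ 6 + -1 * x ^ 5) * h2
    have s7 : x ^ 128 = (x ^ 26 + x ^ 24 + x ^ 21 + x ^ 20 + x ^ 19 + x ^ 18 + x ^ 16 + x ^ 9 + x ^ 8 + x ^ 7 + 1) := by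
      linear_combination (x ^ 64 + x ^ 26 + x ^ 23 + x ^ 21 + x ^ 20 + x ^ 17 + x ^ 15 + x ^ 10 + x ^ 9 + x ^ 5 + x ^ 4 + x ^ 3 + x ^ 2 + x) * s6 + (x ^ 25 + x ^ 20 + x ^ 19 + x ^ 18 + x ^ 17 + x ^ 14 + x ^ 12 + x ^ 11 + x ^ 10 + x ^ 8 + x ^ 7 + x ^ 5 + x ^ 3 + x ^ 2 + x + 1) * hP + (x ^ 49 + x ^ 46 + -1 * x ^ 45 + 2 * x ^ 43 + x ^ 41 + -2 * x ^ 39 + -1 * x ^ 37 + x ^ 36 + x ^ 35 + -2 * x ^ 34 + -1 * x ^ 33 + -1 * x ^ 32 + -1 * x ^ 29 + -1 * x ^ 27 + x ^ 25 + x ^ 24 + -2 * x ^ 23 + -1 * x ^ 22 + -2 * x ^ 21 + -3 * x ^ 20 + -1 * x ^ 19 + -2 * x ^ 17 + -2 * x ^ 16 + -2 * x ^ 15 + -1 * x ^ 14 + -1 * x ^ 13 + -1 * x ^ 12 + -1 * x ^ 10 + -1 * x ^ 9 + -1 * x ^ 8 + x ^ 6 + -1 * x ^ 3 + -1 * x ^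 2 + -1 * x + -1) * h2
    have s8 : x ^ 256 = (x ^ 25 + x ^ 24 + x ^ 23 + x ^ 17 + x ^ 15 + x ^ 12 + x ^ 11 + x ^ 10 + x ^ 9 + x ^ 7 + x ^ 6 + x ^ 5 + x ^ 3 + x ^ 2 + 1) := by
      linear_combination (x ^ 128 + x ^ 26 + x ^ 24 + x ^ 21 + x ^ 20 + x ^ 19 + x ^ 18 + x ^ 16 + x ^ 9 + x ^ 8 + x ^ 7 + 1) * s7 + (x ^ 25 + x ^ 21 + x ^ 20 + x ^ 18 + x ^ 17 + x ^ 16 + x ^ 14 + x ^ 13 + x ^ 10 + x ^ 9 + x ^ 8 + x ^ 7 + x ^ 6 + x ^ 5 + x ^ 4 + x ^ 2) * hP + (x ^ 50 + x ^ 46 + x ^ 45 + x ^ 44 + 2 * x ^ 42 + x ^ 39 + -1 * x ^ 36 + -1 * x ^ 33 + -1 * x ^ 32 + -1 * x ^ 31 + -2 * x ^ 30 + -2 * x ^ 29 + -1 * x ^ 26 + -2 * x ^ 25 + -1 * x ^ 24 + -3 * x ^ 23 + -4 * x ^ 22 + -3 * x ^ 21 + -2 * x ^ 20 + -3 * x ^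 19 + -2 * x ^ 18 + -3 * x ^ 17 + -2 * x ^ 15 + -2 * x ^ 14 + -2 * x ^ 13 + -2 * x ^ 12 + -3 * x ^ 11 + -3 * x ^ 10 + -2 * x ^ 9 + -1 * x ^ 8 + -2 * x ^ 7 + -2 * x ^ 6 + -2 * x ^ 5 + -1 * x ^ 4 + -1 * x ^ 3 + -1 * x ^ 2) * h2
    have s9 : x ^ 512 = (x ^ 26 + x ^ 25 + x ^ 24 + x ^ 23 + x ^ 22 + x ^ 19 + x ^ 14 + x ^ 13 + x ^ 11 + x ^ 10 + x ^ 9 + x ^ 4 + x ^ 3 + x) := by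
      linear_combination (x ^ 256 + x ^ 25 + x ^ 24 + x ^ 23 + x ^ 17 + x ^ 15 + x ^ 12 + x ^ 11 + x ^ 10 + x ^ 9 + x ^ 7 + x ^ 6 + x ^ 5 + x ^ 3 + x ^ 2 + 1) * s8 + (x ^ 23 + x ^ 21 + x ^ 19 + x ^ 18 + x ^ 15 + x ^ 12 + x ^ 11 + x ^ 7 + x ^ 6 + x ^ 5 + x ^ 3 + x ^ 2 + 1) * hP + (x ^ 49 + x ^ 48 + x ^ 47 + -1 * x ^ 45 + -1 * x ^ 43 + x ^ 40 + -1 * x ^ 38 + x ^ 36 + 2 * x ^ 35 + x ^ 34 + x ^ 32 + x ^ 30 + 2 * x ^ 29 + x ^ 28 + x ^ 27 + x ^ 26 + -1 * x ^ 24 + x ^ 18 + 3 * x ^ 17 + x ^ 16 + x ^ 15 + x ^ 14 + x ^ 13 + 2 * x ^ 12 + x ^ 11 + x ^ 10 + x ^ 9 + -1 * x ^ 4 + -1 * x ^ 3 + -1 * x) * h2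
    have s10 : x ^ 1024 = (x ^ 25 + x ^ 23 + x ^ 21 + x ^ 20 + x ^ 19 + x ^ 13 + x ^ 10 + x ^ 8 + x ^ 7 + x ^ 6 + x ^ 5 + x ^ 4 + x ^ 2 + x) := by
      linear_combination (x ^ 512 + x ^ 26 + x ^ 25 + x ^ 24 + x ^ 23 + x ^ 22 + x ^ 19 + x ^ 14 + x ^ 13 + x ^ 11 + x ^ 10 + x ^ 9 + x ^ 4 + x ^ 3 + x) * s9 + (x ^ 25 + x ^ 23 + x ^ 21 + x ^ 20 + x ^ 19 + x ^ 13 + x ^ 10 + x ^ 8 + x ^ 7 + x ^ 6 + x ^ 5 + x ^ 4 + x ^ 2 + x) * hP + (x ^ 51 + x ^ 50 + 2 * x ^ 49 + 2 * x ^ 48 + x ^ 47 + x ^ 46 + x ^ 45 + x ^ 44 + -1 * x ^ 40 + x ^ 39 + x ^ 38 + 2 * x ^ 37 + 3 * x ^ 36 + 2 * x ^ 35 + x ^ 34 + 2 * x ^ 33 + x ^ 29 + 2 * x ^ 27 + -1 * x ^ 25 + -1 * x ^ 22 + -3 * x ^ 21 + -1 * x ^ 20 + -2 * x ^ 19 +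 -1 * x ^ 16 + x ^ 14 + -1 * x ^ 13 + x ^ 12 + -1 * x ^ 11 + -2 * x ^ 10 + -2 * x ^ 9 + -2 * x ^ 8 + -2 * x ^ 7 + -2 * x ^ 6 + -1 * x ^ 5 + -1 * x ^ 4 + -1 * x ^ 3 + -1 * x ^ 2 + -1 * x) * h2
    have s11 : x ^ 2048 = (x ^ 23 + x ^ 19 + x ^ 18 + x ^ 16 + x ^ 14 + x ^ 12 + x ^ 11 + x ^ 10 + x ^ 9 + x ^ 7 + x ^ 6 + x ^ 3 + x ^ 2 + x) := by
      linear_combination (x ^ 1024 + x ^ 25 + x ^ 23 + x ^ 21 + x ^ 20 + x ^ 19 + x ^ 13 + x ^ 10 + x ^ 8 + x ^ 7 + x ^ 6 + x ^ 5 + x ^ 4 + x ^ 2 + x) * s10 + (x ^ 23 + x ^ 19 + x ^ 18 + x ^ 16 + x ^ 14 + x ^ 12 + x ^ 11 + x ^ 10 + x ^ 9 + x ^ 7 + x ^ 6 + x ^ 3 + x ^ 2 + x) * hP + (x ^ 48 + x ^ 46 + 2 * x ^ 44 + x ^ 42 + x ^ 40 + -1 * x ^ 38 + -1 * x ^ 37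 + -1 * x ^ 36 + -1 * x ^ 34 + x ^ 33 + x ^ 30 + x ^ 29 + 3 * x ^ 27 + 2 * x ^ 26 + x ^ 25 + -1 * x ^ 23 + -1 * x ^ 22 + -1 * x ^ 21 + -3 * x ^ 19 + -1 * x ^ 18 + -2 * x ^ 16 + x ^ 9 + x ^ 8 + -1 * x ^ 4 + -1 * x ^ 3 + -1 * x ^ 2 + -1 * x) * h2
    have s12 : x ^ 4096 = (x ^ 26 + x ^ 25 + x ^ 22 + x ^ 20 + x ^ 18 + x ^ 17 + x ^ 16 + x ^ 15 + x ^ 14 + x ^ 12 + x ^ 11 + x ^ 10 + x ^ 8 + x ^ 7 + x ^ 5 + x ^ 3 + x) := by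
      linear_combination (x ^ 2048 + x ^ 23 + x ^ 19 + x ^ 18 + x ^ 16 + x ^ 14 + x ^ 12 + x ^ 11 + x ^ 10 + x ^ 9 + x ^ 7 + x ^ 6 + x ^ 3 + x ^ 2 + x) * s11 + (x ^ 19 + x ^ 14 + x ^ 12 + x ^ 7 + x ^ 6 + x ^ 5 + x) * hP + (x ^ 42 + 2 * x ^ 37 + 2 * x ^ 35 + x ^ 33 + x ^ 32 + 4 * x ^ 30 + 2 * x ^ 29 + 2 * x ^ 28 + 2 * x ^ 26 + 3 * x ^ 25 + 2 * x ^ 24 + 2 * x ^ 23 + 2 * x ^ 22 + 3 * x ^ 21 + 2 * x ^ 20 + 2 * x ^ 19 + 2 * x ^ 18 + 2 * x ^ 17 + x ^ 16 + x ^ 15 + 3 * x ^ 13 + 2 * x ^ 12 + x ^ 11 + x ^ 9 + -1 * x ^ 7 + -1 * x ^ 6 + x ^ 4 + -1 * x) * h2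
    have s13 : x ^ 8192 = (x ^ 23 + x ^ 21 + x ^ 19 + x ^ 17 + x ^ 14 + x ^ 11 + x ^ 10 + x ^ 7 + x ^ 6 + x ^ 3 + 1) := by
      linear_combination (x ^ 4096 + x ^ 26 + x ^ 25 + x ^ 22 + x ^ 20 + x ^ 18 + x ^ 17 + x ^ 16 + x ^ 15 + x ^ 14 + x ^ 12 + x ^ 11 + x ^ 10 + x ^ 8 + x ^ 7 + x ^ 5 + x ^ 3 + x) * s12 + (x ^ 25 + x ^ 23 + x ^ 20 + x ^ 16 + x ^ 13 + x ^ 12 + x ^ 11 + x ^ 10 + x ^ 9 + x ^ 7 + x ^ 6 + x ^ 2 + x + 1) * hP + (x ^ 51 + x ^ 48 + x ^ 46 + x ^ 44 + x ^ 43 + 2 * x ^ 42 + 2 * x ^ 41 + 2 * x ^ 40 + x ^ 39 + x ^ 38 + 3 * x ^ 37 + 3 * x ^ 36 + x ^ 35 + 3 * x ^ 34 + 3 * x ^ 33 + 3 * x ^ 32 + 2 * x ^ 31 + 4 * x ^ 30 + 2 * x ^ 29 + 2 * x ^ 28 + 4 * x ^ 27 + 2 * x ^ 26 + 2 * x ^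 25 + x ^ 24 + 3 * x ^ 23 + x ^ 22 + x ^ 21 + x ^ 20 + 2 * x ^ 19 + 2 * x ^ 18 + 2 * x ^ 17 + x ^ 15 + -2 * x ^ 14 + -1 * x ^ 12 + -1 * x ^ 11 + -1 * x ^ 10 + -1 * x ^ 9 + x ^ 8 + -2 * x ^ 7 + -1 * x ^ 5 + -2 * x ^ 3 + -1 * x ^ 2 + -1 * x + -1) * h2
    have s14 : x ^ 16384 = (x ^ 25 + x ^ 23 + x ^ 21 + x ^ 18 + x ^ 16 + x ^ 14 + x ^ 10 + x ^ 9 + x ^ 8 + x ^ 6 + x ^ 5 + x ^ 3 + 1) := by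
      linear_combination (x ^ 8192 + x ^ 23 + x ^ 21 + x ^ 19 + x ^ 17 + x ^ 14 + x ^ 11 + x ^ 10 + x ^ 7 + x ^ 6 + x ^ 3 + 1) * s13 + (x ^ 19 + x ^ 15 + x ^ 14 + x ^ 12 + x ^ 10 + x ^ 9 + x ^ 8 + x ^ 7 + x ^ 6 + x ^ 5 + x ^ 4 + x ^ 3) * hP + (x ^ 44 + x ^ 42 + -1 * x ^ 41 + 2 * x ^ 40 + -1 * x ^ 39 + x ^ 38 + -1 * x ^ 34 + x ^ 33 + -1 * x ^ 32 + -1 * x ^ 27 + -1 * x ^ 25 + -1 * x ^ 23 + -1 * x ^ 22 + -2 * x ^ 19 + -2 * x ^ 18 + x ^ 17 + -2 * x ^ 16 + -3 * x ^ 15 + -2 * x ^ 12 + -1 * x ^ 11 + -1 * x ^ 10 + -2 * x ^ 9 + -3 * x ^ 8 + -1 * x ^ 7 + -1 * x ^ 6 + -2 * x ^ 5 + -1 * x ^ 4) * h2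
    have s15 : x ^ 32768 = (x ^ 26 + x ^ 25 + x ^ 24 + x ^ 23 + x ^ 21 + x ^ 20 + x ^ 16 + x ^ 15 + x ^ 11 + x ^ 10 + x ^ 3) := by
      linear_combination (x ^ 16384 + x ^ 25 + x ^ 23 + x ^ 21 + x ^ 18 + x ^ 16 + x ^ 14 + x ^ 10 + x ^ 9 + x ^ 8 + x ^ 6 + x ^ 5 + x ^ 3 + 1) * s14 + (x ^ 23 + x ^ 19 + x ^ 18 + x ^ 16 + x ^ 14 + x ^ 13 + x ^ 12 + x ^ 10 + x ^ 8 + x ^ 7 + x ^ 6 + x ^ 3 + x + 1) * hP + (x ^ 48 + x ^ 46 + -1 * x ^ 45 + x ^ 44 + x ^ 41 + -1 * x ^ 40 + 2 * x ^ 39 + -2 * x ^ 38 + x ^ 37 + -1 * x ^ 36 + x ^ 31 + x ^ 30 + -1 * x ^ 27 + x ^ 26 + -2 * x ^ 25 + 2 * x ^ 24 + -1 * x ^ 23 + -1 * x ^ 22 + -1 * x ^ 21 + -2 * x ^ 20 + -1 * x ^ 19 + -1 * x ^ 16 + -2 * x ^ 15 + x ^ 14 + -1 * x ^ 13 + -1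 * x ^ 12 + -1 * x ^ 10 + -1 * x ^ 7 + -1 * x ^ 4 + -1 * x ^ 3 + -1 * x ^ 2 + -1 * x) * h2
    have s16 : x ^ 65536 = (x ^ 26 + x ^ 25 + x ^ 24 + x ^ 23 + x ^ 22 + x ^ 21 + x ^ 19 + x ^ 18 + x ^ 15 + x ^ 13 + x ^ 12 + x) := by
      linear_combination (x ^ 32768 + x ^ 26 + x ^ 25 + x ^ 24 + x ^ 23 + x ^ 21 + x ^ 20 + x ^ 16 + x ^ 15 + x ^ 11 + x ^ 10 + x ^ 3) * s15 + (x ^ 25 + x ^ 23 + x ^ 21 + x ^ 20 + x ^ 19 + x ^ 17 + x ^ 15 + x ^ 12 + x ^ 11 + x ^ 10 + x ^ 9 + x ^ 8 + x ^ 7 + x ^ 6 + x ^ 5 + x ^ 2 + x) * hP + (x ^ 51 + x ^ 50 + 2 * x ^ 49 + x ^ 48 + x ^ 47 + 2 * x ^ 46 + x ^ 45 + x ^ 44 + 2 * x ^ 41 + x ^ 40 + -1 * x ^ 38 + 2 * x ^ 36 + x ^ 35 + -1 * x ^ 34 + -1 * x ^ 33 + -2 * x ^ 32 + x ^ 31 +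 -2 * x ^ 30 + -2 * x ^ 29 + -3 * x ^ 28 + -1 * x ^ 27 + -1 * x ^ 26 + -3 * x ^ 25 + -4 * x ^ 24 + -3 * x ^ 23 + -4 * x ^ 22 + -4 * x ^ 21 + -4 * x ^ 20 + -2 * x ^ 19 + -2 * x ^ 18 + -3 * x ^ 17 + -2 * x ^ 16 + -3 * x ^ 15 + -2 * x ^ 14 + -2 * x ^ 13 + -3 * x ^ 12 + -3 * x ^ 11 + -3 * x ^ 10 + -2 * x ^ 9 + -2 * x ^ 8 + -2 * x ^ 7 + -1 * x ^ 6 + -1 * x ^ 5 + -1 * x ^ 4 + -1 * x ^ 3 + -1 * x ^ 2 + -1 * x) * h2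
    have s17 : x ^ 131072 = (x ^ 25 + x ^ 22 + x ^ 17 + x ^ 16 + x ^ 15 + x ^ 14 + x ^ 12 + x ^ 8 + x ^ 7 + x ^ 4 + x ^ 3 + x) := by
      linear_combination (x ^ 65536 + x ^ 26 + x ^ 25 + x ^ 24 + x ^ 23 + x ^ 22 + x ^ 21 + x ^ 19 + x ^ 18 + x ^ 15 + x ^ 13 + x ^ 12 + x) * s16 + (x ^ 25 + x ^ 23 + x ^ 21 + x ^ 20 + x ^ 19 + x ^ 15 + x ^ 13 + x ^ 9 + x ^ 6 + x) * hP + (x ^ 51 + x ^ 50 + 2 * x ^ 49 + 2 * x ^ 48 + 2 * x ^ 47 + 2 * x ^ 46 + 2 * x ^ 45 + 3 * x ^ 44 + 2 * x ^ 43 + x ^ 42 + 2 * x ^ 41 + x ^ 40 + 2 * x ^ 39 + 2 * x ^ 38 + 3 * x ^ 37 + 2 * x ^ 36 + x ^ 34 + -1 * x ^ 32 + x ^ 31 + -1 * x ^ 29 + -3 * x ^ 28 + x ^ 27 + -1 * x ^ 26 + -1 * x ^ 25 + -1 * x ^ 24 + -1 * x ^ 23 + -2 * x ^ 22 + -3 *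 x ^ 21 + -1 * x ^ 20 + -2 * x ^ 18 + -1 * x ^ 17 + -1 * x ^ 16 + -2 * x ^ 15 + -1 * x ^ 14 + -1 * x ^ 12 + -1 * x ^ 11 + -1 * x ^ 10 + -1 * x ^ 9 + -1 * x ^ 8 + -1 * x ^ 7 + -1 * x ^ 6 + -1 * x ^ 4 + -1 * x ^ 3 + -1 * x) * h2
    have s18 : x ^ 262144 = (x ^ 26 + x ^ 21 + x ^ 19 + x ^ 18 + x ^ 14 + x ^ 12 + x ^ 11 + x ^ 8 + x ^ 4 + x ^ 2 + x) := by
      linear_combination (x ^ 131072 + x ^ 25 + x ^ 22 + x ^ 17 + x ^ 16 + x ^ 15 + x ^ 14 + x ^ 12 + x ^ 8 + x ^ 7 + x ^ 4 + x ^ 3 + x) * s17 + (x ^ 23 + x ^ 18 + x ^ 17 + x ^ 16 + x ^ 15 + x ^ 13 + x ^ 12 + x ^ 11 + x ^ 10 + x ^ 9 + x ^ 7 + x ^ 6 + x ^ 4 + x ^ 2 + x) * hP + (x ^ 47 + -1 * x ^ 45 + -1 * x ^ 43 + x ^ 41 + x ^ 39 + -1 * x ^ 38 + -1 * x ^ 36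 + -2 * x ^ 35 + -1 * x ^ 31 + x ^ 29 + -1 * x ^ 28 + -1 * x ^ 27 + -1 * x ^ 26 + -1 * x ^ 25 + -1 * x ^ 24 + -1 * x ^ 22 + -2 * x ^ 21 + -1 * x ^ 19 + -1 * x ^ 18 + -1 * x ^ 17 + -1 * x ^ 16 + -3 * x ^ 14 + -2 * x ^ 13 + -2 * x ^ 12 + -1 * x ^ 11 + -1 * x ^ 10 + -1 * x ^ 9 + -1 * x ^ 7 + -1 * x ^ 6 + -1 * x ^ 4 + -1 * x ^ 3 + -1 * x ^ 2 + -1 * x) * h2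
    have s19 : x ^ 524288 = (x ^ 26 + x ^ 25 + x ^ 21 + x ^ 20 + x ^ 19 + x ^ 17 + x ^ 14 + x ^ 13 + x ^ 12 + x ^ 10 + x ^ 8 + x ^ 7 + x ^ 4 + x ^ 3 + x ^ 2 + 1) := by
      linear_combination (x ^ 262144 + x ^ 26 + x ^ 21 + x ^ 19 + x ^ 18 + x ^ 14 + x ^ 12 + x ^ 11 + x ^ 8 + x ^ 4 + x ^ 2 + x) * s18 + (x ^ 25 + x ^ 20 + x ^ 18 + x ^ 17 + x ^ 13 + x ^ 11 + x ^ 10 + x ^ 7 + x ^ 3 + x + 1) * hP + (-1 * x ^ 26 + -1 * x ^ 25 + -1 * x ^ 21 + -1 * x ^ 20 + -1 * x ^ 19 + -1 * x ^ 18 + -1 * x ^ 17 + -1 * x ^ 14 + -1 * x ^ 13 + -1 * x ^ 12 + -1 * x ^ 11 + -1 * x ^ 10 + -1 * x ^ 8 + -1 * x ^ 7 + -1 * x ^ 4 + -1 * x ^ 3 + -1 * x ^ 2 + -1 * x + -1) * h2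
    have s20 : x ^ 1048576 = (x ^ 24 + x ^ 23 + x ^ 19 + x ^ 18 + x ^ 17 + x ^ 15 + x ^ 12 + x ^ 11 + x ^ 10 + x ^ 8 + x ^ 6 + x ^ 5 + x ^ 2 + x) := by
      linear_combination (x ^ 524288 + x ^ 26 + x ^ 25 + x ^ 21 + x ^ 20 + x ^ 19 + x ^ 17 + x ^ 14 + x ^ 13 + x ^ 12 + x ^ 10 + x ^ 8 + x ^ 7 + x ^ 4 + x ^ 3 + x ^ 2 + 1) * s19 + (x ^ 25 + x ^ 23 + x ^ 20 + x ^ 17 + x ^ 16 + x ^ 15 + x ^ 13 + x ^ 10 + x ^ 9 + x ^ 8 + x ^ 7 + x ^ 5 + x ^ 3 + 1) * hP + (x ^ 51 + 2 * x ^ 46 + x ^ 45 + x ^ 41 + x ^ 40 + 2 * x ^ 39 + 2 * x ^ 38 + -1 * x ^ 35 + 2 * x ^ 34 + 4 * x ^ 33 + 2 * x ^ 31 + 2 * x ^ 29 + x ^ 28 + 2 * x ^ 27 + x ^ 26 + 2 * x ^ 24 + x ^ 23 + 3 * x ^ 21 + x ^ 20 + -2 * x ^ 18 + x ^ 17 +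 x ^ 16 + 2 * x ^ 14 + -1 * x ^ 9 + -1 * x ^ 8 + x ^ 7 + -1 * x ^ 5 + x ^ 4 + -1 * x) * h2
    have s21 : x ^ 2097152 = (x ^ 26 + x ^ 23 + x ^ 21 + x ^ 20 + x ^ 16 + x ^ 13 + x ^ 12 + x ^ 11 + x ^ 9 + x ^ 8 + x ^ 7 + x ^ 6 + x ^ 5 + x) := by
      linear_combination (x ^ 1048576 + x ^ 24 + x ^ 23 + x ^ 19 + x ^ 18 + x ^ 17 + x ^ 15 + x ^ 12 + x ^ 11 + x ^ 10 + x ^ 8 + x ^ 6 + x ^ 5 + x ^ 2 + x) * s20 + (x ^ 21 + x ^ 19 + x ^ 16 + x ^ 13 + x ^ 12 + x ^ 11 + x ^ 9 + x ^ 6 + x ^ 5 + x ^ 4 + x ^ 3 + x) * hP + (x ^ 47 + 2 * x ^ 42 + x ^ 41 + x ^ 37 + x ^ 36 + 2 * x ^ 35 + 2 * x ^ 34 + -1 * x ^ 31 + 2 * x ^ 30 + 4 * x ^ 29 + 2 * x ^ 27 + 2 * x ^ 25 + x ^ 23 + -1 * x ^ 21 + 2 * x ^ 20 + x ^ 19 +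 x ^ 17 + -1 * x ^ 15 + -1 * x ^ 14 + -1 * x ^ 9 + -1 * x ^ 8 + -2 * x ^ 6 + -2 * x ^ 5 + -1 * x ^ 4 + -1 * x) * h2
    have s22 : x ^ 4194304 = (x ^ 26 + x ^ 23 + x ^ 18 + x ^ 14 + x ^ 12 + x ^ 11 + x ^ 8 + x ^ 6 + x ^ 5 + x ^ 4 + x ^ 2 + 1) := by
      linear_combination (x ^ 2097152 + x ^ 26 + x ^ 23 + x ^ 21 + x ^ 20 + x ^ 16 + x ^ 13 + x ^ 12 + x ^ 11 + x ^ 9 + x ^ 8 + x ^ 7 + x ^ 6 + x ^ 5 + x) * s21 + (x ^ 25 + x ^ 20 + x ^ 19 + x ^ 18 + x ^ 17 + x ^ 14 + x ^ 12 + x ^ 11 + x ^ 10 + x ^ 8 + x + 1) * hP + (x ^ 49 + x ^ 46 + -1 * x ^ 45 + x ^ 43 + x ^ 42 + -1 * x ^ 40 + -1 * x ^ 38 + x ^ 36 + x ^ 35 + x ^ 34 + x ^ 33 + 2 * x ^ 32 + x ^ 31 + -1 * x ^ 30 + 2 * x ^ 29 + 2 * x ^ 28 + x ^ 27 + x ^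 25 + 2 * x ^ 24 + -2 * x ^ 23 + x ^ 22 + x ^ 21 + -1 * x ^ 20 + 2 * x ^ 18 + 2 * x ^ 17 + x ^ 16 + x ^ 14 + -1 * x ^ 11 + x ^ 7 + -1 * x ^ 5 + -1 * x ^ 4 + -1 * x ^ 3 + -1 * x ^ 2 + -1 * x + -1) * h2
    have s23 : x ^ 8388608 = (x ^ 24 + x ^ 20 + x ^ 19 + x ^ 18 + x ^ 16 + x ^ 14 + x ^ 13 + x ^ 12 + x ^ 11 + x ^ 10 + x ^ 9 + x ^ 8 + x ^ 7 + x ^ 6 + x ^ 5 + x ^ 4 + x ^ 3 + x ^ 2 + 1) := by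
      linear_combination (x ^ 4194304 + x ^ 26 + x ^ 23 + x ^ 18 + x ^ 14 + x ^ 12 + x ^ 11 + x ^ 8 + x ^ 6 + x ^ 5 + x ^ 4 + x ^ 2 + 1) * s22 + (x ^ 25 + x ^ 20 + x ^ 19 + x ^ 18 + x ^ 17 + x ^ 15 + x ^ 14 + x ^ 13 + x ^ 12 + x ^ 11 + x ^ 9 + x ^ 8 + x ^ 7 + x ^ 6 + x ^ 5 + x ^ 4 + x ^ 2) * hP + (x ^ 49 + -1 * x ^ 47 + -1 * x ^ 45 + -1 * x ^ 42 + -1 * x ^ 40 + -2 * x ^ 39 + -1 * x ^ 38 + -1 * x ^ 36 + -1 * x ^ 35 + -1 * x ^ 34 + -3 * x ^ 33 + -1 * x ^ 32 + -1 * x ^ 31 + -1 * x ^ 30 + -1 * x ^ 29 + -1 * x ^ 28 + -3 * x ^ 27 + -1 * x ^ 26 + -1 * x ^ 25 + -3 * x ^ 24 + -1 * x ^ 22 + -4 * x ^ 21 + -2 * x ^ 20 + -2 * x ^ 19 + -1 * x ^ 18 + -2 * x ^ 17 + -2 * x ^ 15 + -1 * x ^ 14 + -1 * x ^ 13 + -1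 * x ^ 11 + -2 * x ^ 9 + -2 * x ^ 7 + -1 * x ^ 5 + -1 * x ^ 3) * h2
    have s24 : x ^ 16777216 = (x ^ 23 + x ^ 22 + x ^ 20 + x ^ 18 + x ^ 17 + x ^ 16 + x ^ 11 + x ^ 9 + x ^ 8 + x ^ 5 + x ^ 4) := by
      linear_combination (x ^ 8388608 + x ^ 24 + x ^ 20 + x ^ 19 + x ^ 18 + x ^ 16 + x ^ 14 + x ^ 13 + x ^ 12 + x ^ 11 + x ^ 10 + x ^ 9 + x ^ 8 + x ^ 7 + x ^ 6 + x ^ 5 + x ^ 4 + x ^ 3 + x ^ 2 + 1) * s23 + (x ^ 21 + x ^ 16 + x ^ 14 + x ^ 8 + x ^ 5 + x ^ 4 + x + 1) * hP + (x ^ 44 + x ^ 42 + -1 * x ^ 41 + x ^ 40 + x ^ 39 + 2 * x ^ 38 + 2 * x ^ 37 + x ^ 36 + x ^ 35 + 2 * x ^ 34 + 2 * x ^ 33 + 4 * x ^ 32 + 3 * x ^ 31 + 4 * x ^ 30 + 4 * x ^ 29 + 4 * x ^ 28 + 4 * x ^ 27 + 5 * x ^ 26 + 5 * x ^ 25 +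 6 * x ^ 24 + 4 * x ^ 23 + 6 * x ^ 22 + 5 * x ^ 21 + 5 * x ^ 20 + 5 * x ^ 19 + 6 * x ^ 18 + 3 * x ^ 17 + 5 * x ^ 16 + 5 * x ^ 15 + 5 * x ^ 14 + 4 * x ^ 13 + 5 * x ^ 12 + 4 * x ^ 11 + 3 * x ^ 10 + 2 * x ^ 9 + 2 * x ^ 8 + 2 * x ^ 7 + x ^ 6 + -1 * x) * h2
    have s25 : x ^ 33554432 = (x ^ 26 + x ^ 20 + x ^ 19 + x ^ 16 + x ^ 15 + x ^ 14 + x ^ 10 + x ^ 9 + x ^ 8 + x ^ 7 + x ^ 5 + x ^ 4 + x) := by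
      linear_combination (x ^ 16777216 + x ^ 23 + x ^ 22 + x ^ 20 + x ^ 18 + x ^ 17 + x ^ 16 + x ^ 11 + x ^ 9 + x ^ 8 + x ^ 5 + x ^ 4) * s24 + (x ^ 19 + x ^ 17 + x ^ 14 + x ^ 13 + x ^ 11 + x ^ 10 + x ^ 9 + x ^ 8 + x ^ 7 + x ^ 6 + x ^ 5 + x ^ 4 + x ^ 2 + x) * hP + (x ^ 45 + x ^ 43 + x ^ 42 + 2 * x ^ 40 + x ^ 39 + x ^ 38 + x ^ 34 + -1 * x ^ 32 + x ^ 31 + -1 * x ^ 30 + -1 * x ^ 29 + 2 * x ^ 27 + -1 * x ^ 26 + x ^ 25 + -1 * x ^ 24 + -2 * x ^ 23 + -1 * x ^ 22 + -1 * x ^ 21 + -2 * x ^ 20 + -3 * x ^ 19 + -2 * x ^ 18 + -2 * x ^ 17 + -2 * x ^ 16 + -2 * x ^ 15 + -3 * x ^ 14 + -1 * x ^ 13 + -1 * x ^ 12 + -3 * x ^ 11 + -3 * x ^ 10 + -2 * x ^ 9 + -2 * x ^ 8 + -3 * x ^ 7 + -2 * x ^ 6 + -2 * x ^ 5 + -2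 * x ^ 4 + -1 * x ^ 3 + -1 * x ^ 2 + -1 * x) * h2
    have s26 : x ^ 67108864 = (x ^ 26 + x ^ 23 + x ^ 18 + x ^ 17 + x ^ 16 + x ^ 15 + x ^ 13 + x ^ 9 + x ^ 8 + x ^ 5 + x ^ 4 + x ^ 2 + x) := by
      linear_combination (x ^ 33554432 + x ^ 26 + x ^ 20 + x ^ 19 + x ^ 16 + x ^ 15 + x ^ 14 + x ^ 10 + x ^ 9 + x ^ 8 + x ^ 7 + x ^ 5 + x ^ 4 + x) * s25 + (x ^ 25 + x ^ 20 + x ^ 18 + x ^ 17 + x ^ 15 + x ^ 11 + x ^ 9 + x ^ 6 + x ^ 5 + x ^ 4 + x ^ 2 + x) * hP + (-1 * x ^ 47 + x ^ 46 + -1 * x ^ 44 + x ^ 41 + -1 * x ^ 38 + -2 * x ^ 37 + x ^ 36 + 2 * x ^ 35 + 2 * x ^ 34 + -1 * x ^ 32 + x ^ 30 + x ^ 29 + x ^ 27 + -1 * x ^ 26 + x ^ 25 + 2 * x ^ 24 + x ^ 23 + x ^ 19 + -1 * x ^ 18 + x ^ 15 + x ^ 12 + -2 * x ^ 7 + -1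 * x ^ 6 + -1 * x ^ 5 + -2 * x ^ 4 + -1 * x ^ 3 + -1 * x ^ 2 + -1 * x) * h2
    have s27 : x ^ 134217728 = (x) := by
      linear_combination (x ^ 67108864 + x ^ 26 + x ^ 23 + x ^ 18 + x ^ 17 + x ^ 16 + x ^ 15 + x ^ 13 + x ^ 9 + x ^ 8 + x ^ 5 + x ^ 4 + x ^ 2 + x) * s26 + (x ^ 25 + x ^ 20 + x ^ 19 + x ^ 18 + x ^ 17 + x ^ 15 + x ^ 14 + x ^ 13 + x ^ 12 + x ^ 11 + x ^ 9 + x ^ 8 + x ^ 6 + x ^ 4 + x ^ 3 + x) * hP + (x ^ 49 + -1 * x ^ 47 + -1 * x ^ 45 + x ^ 43 + x ^ 41 + -1 * x ^ 40 + -1 * x ^ 38 + -2 * x ^ 37 + -1 * x ^ 33 + x ^ 31 + -1 * x ^ 30 + -1 * x ^ 29 + -1 * x ^ 28 + -1 * x ^ 26 + -2 * x ^ 23 + -1 * x ^ 21 + -1 * x ^ 20 + x ^ 17 + -2 * x ^ 16 + -2 * x ^ 15 + -1 * x ^ 14 + -1 * x ^ 13 + -1 * x ^ 12 + -1 * x ^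 11 + x ^ 10 + -1 * x ^ 8 + -1 * x ^ 4 + -1 * x) * h2
    have h512 : x ^ 512 = x := key x s27 hxn
    have hm : (x ^ 26 + x ^ 25 + x ^ 24 + x ^ 23 + x ^ 22 + x ^ 19 + x ^ 14 + x ^ 13 + x ^ 11 + x ^ 10 + x ^ 9 + x ^ 4 + x ^ 3) = 0 := by
      linear_combination h512 - s9
    exact one_ne_zero (α := GaloisField 2 n) (by linear_combination (x ^ 24 + x ^ 21 + x ^ 19 + x ^ 18 + x ^ 17 + x ^ 15 + x ^ 14 + x ^ 11 + x ^ 10 + x ^ 9 + x ^ 8 + x ^ 7 + x ^ 5 + x ^ 4 + x + 1) * hP + (x ^ 25 + x ^ 24 + x ^ 22 + x ^ 21 + x ^ 20 + x ^ 17 + x ^ 16 + x ^ 14 + x ^ 12 + x ^ 7 + x ^ 6 + x ^ 4 + x ^ 2) * hm + (-1 * x ^ 51 + -1 * x ^ 50 + -1 * x ^ 49 + -2 * x ^ 48 + -2 * x ^ 47 + -3 * x ^ 46 + -2 * x ^ 45 + -3 * x ^ 44 + -3 * x ^ 43 + -2 * x ^ 42 + -3 * x ^ 41 + -3 * x ^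 40 + -4 * x ^ 39 + -4 * x ^ 38 + -4 * x ^ 37 + -5 * x ^ 36 + -4 * x ^ 35 + -5 * x ^ 34 + -5 * x ^ 33 + -4 * x ^ 32 + -6 * x ^ 31 + -7 * x ^ 30 + -6 * x ^ 29 + -6 * x ^ 28 + -7 * x ^ 27 + -7 * x ^ 26 + -5 * x ^ 25 + -6 * x ^ 24 + -6 * x ^ 23 + -4 * x ^ 22 + -5 * x ^ 21 + -7 * x ^ 20 + -5 * x ^ 19 + -4 * x ^ 18 + -5 * x ^ 17 + -5 * x ^ 16 + -4 * x ^ 15 + -3 * x ^ 14 + -4 * x ^ 13 + -3 * x ^ 12 + -3 * x ^ 11 + -4 * x ^ 10 + -3 * x ^ 9 + -2 * x ^ 8 + -2 * x ^ 7 + -2 * x ^ 6 + -2 * x ^ 5 + -1 * x ^ 4 + -1 * x ^ 3 + -1 * x ^ 2 + -1 * x) * h2)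
  · have s1 : x ^ 2 = x ^ 2 := rfl
    have s2 : x ^ 4 = (x ^ 4) := by
      linear_combination (2 * x ^ 2) * s1
    have s3 : x ^ 8 = (x ^ 8) := by
      linear_combination (2 * x ^ 4) * s2
    have s4 : x ^ 16 = (x ^ 16) := by
      linear_combination (2 * x ^ 8) * s3
    have s5 : x ^ 32 = (x ^ 25 + x ^ 22 + x ^ 20 + x ^ 19 + x ^ 18 + x ^ 17 + x ^ 15 + x ^ 11 + x ^ 10 + x ^ 8 + x ^ 6 + x ^ 5 + x ^ 4 + x) := by
      linear_combination (2 * x ^ 16) * s4 + (x ^ 5 + x ^ 4 + x) * hP + (-1 * x ^ 31 + -1 * x ^ 30 + -1 * x ^ 29 + -1 * x ^ 28 + -1 * x ^ 27 + -1 * x ^ 26 + -1 * x ^ 25 + -1 * x ^ 23 + -1 * x ^ 22 + -1 * x ^ 20 + -2 * x ^ 19 + -1 * x ^ 18 + -1 * x ^ 17 + -1 * x ^ 16 + -1 * x ^ 15 + -1 * x ^ 13 + -1 * x ^ 12 + -1 * x ^ 11 + -1 * x ^ 10 + -1 * x ^ 9 + -1 * x ^ 8 + -1 * x ^ 6 +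 -1 * x ^ 5 + -1 * x ^ 4 + -1 * x) * h2
    have s6 : x ^ 64 = (x ^ 26 + x ^ 24 + x ^ 23 + x ^ 22 + x ^ 20 + x ^ 19 + x ^ 17 + x ^ 16 + x ^ 15 + x ^ 14 + x ^ 13 + x ^ 12 + x ^ 11 + x ^ 10 + x ^ 3) := by
      linear_combination (x ^ 32 + x ^ 25 + x ^ 22 + x ^ 20 + x ^ 19 + x ^ 18 + x ^ 17 + x ^ 15 + x ^ 11 + x ^ 10 + x ^ 8 + x ^ 6 + x ^ 5 + x ^ 4 + x) * s5 + (x ^ 23 + x ^ 22 + x ^ 19 + x ^ 17 + x ^ 15 + x ^ 13 + x ^ 12 + x ^ 9 + x ^ 7 + x ^ 3 + x ^ 2) * hP + (-1 * x ^ 49 + -1 * x ^ 48 + -1 * x ^ 46 + x ^ 42 + -1 * x ^ 41 + x ^ 40 + x ^ 36 + x ^ 35 + -1 * x ^ 34 + x ^ 33 + x ^ 32 + -1 * x ^ 31 + 2 * x ^ 30 + 2 * x ^ 28 + -1 * x ^ 27 + 3 * x ^ 26 + 2 * x ^ 25 + 3 * x ^ 23 + 2 * x ^ 21 + x ^ 19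 + x ^ 18 + -2 * x ^ 17 + 2 * x ^ 16 + x ^ 12 + x ^ 11 + x ^ 9 + x ^ 6 + x ^ 5 + -1 * x ^ 3) * h2
    have s7 : x ^ 128 = (x ^ 26 + x ^ 21 + x ^ 19 + x ^ 18 + x ^ 16 + x ^ 10 + x ^ 9 + x ^ 7 + x ^ 6 + x ^ 4) := by
      linear_combination (x ^ 64 + x ^ 26 + x ^ 24 + x ^ 23 + x ^ 22 + x ^ 20 + x ^ 19 + x ^ 17 + x ^ 16 + x ^ 15 + x ^ 14 + x ^ 13 + x ^ 12 + x ^ 11 + x ^ 10 + x ^ 3) * s6 + (x ^ 25 + x ^ 24 + x ^ 20 + x ^ 19 + x ^ 17 + x ^ 16 + x ^ 14 + x ^ 11 + x ^ 10 + x ^ 7 + x ^ 4) * hP + (-1 * x ^ 51 + x ^ 48 + x ^ 46 + x ^ 45 + x ^ 43 + x ^ 42 + x ^ 41 + 2 * x ^ 40 + 3 * x ^ 39 + 2 * x ^ 38 + 3 * x ^ 37 + 4 * x ^ 36 + 3 * x ^ 35 + 3 * x ^ 34 + 3 * x ^ 33 + x ^ 32 + x ^ 31 + 3 * x ^ 30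 + 2 * x ^ 29 + x ^ 28 + 4 * x ^ 27 + 2 * x ^ 26 + x ^ 25 + 2 * x ^ 23 + -1 * x ^ 21 + x ^ 20 + -2 * x ^ 19 + -1 * x ^ 18 + -1 * x ^ 16 + x ^ 13 + -1 * x ^ 12 + -1 * x ^ 11 + -1 * x ^ 10 + -1 * x ^ 9 + -1 * x ^ 7 + -1 * x ^ 4) * h2
    have s8 : x ^ 256 = (x ^ 25 + x ^ 23 + x ^ 22 + x ^ 21 + x ^ 20 + x ^ 19 + x ^ 18 + x ^ 17 + x ^ 15 + x ^ 14 + x ^ 13 + x ^ 10 + x ^ 8 + x ^ 7 + x ^ 3 + x) := by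
      linear_combination (x ^ 128 + x ^ 26 + x ^ 21 + x ^ 19 + x ^ 18 + x ^ 16 + x ^ 10 + x ^ 9 + x ^ 7 + x ^ 6 + x ^ 4) * s7 + (x ^ 25 + x ^ 24 + x ^ 21 + x ^ 18 + x ^ 17 + x ^ 14 + x ^ 13 + x ^ 9 + x ^ 7 + x ^ 6 + x ^ 3 + x) * hP + (-1 * x ^ 51 + -1 * x ^ 50 + -1 * x ^ 49 + -1 * x ^ 48 + -1 * x ^ 46 + -2 * x ^ 43 + -1 * x ^ 41 + -1 * x ^ 40 + -2 * x ^ 39 + -1 * x ^ 38 + x ^ 37 + -1 * x ^ 36 + -2 * x ^ 33 + -2 * x ^ 32 + -2 * x ^ 31 + -2 * x ^ 29 + -1 * x ^ 24 + -4 * x ^ 21 + -1 * x ^ 19 + -2 * x ^ 18 + -1 * x ^ 17 + x ^ 16 + -1 * x ^ 15 + -1 * x ^ 14 + -1 * x ^ 9 + -1 * x ^ 8 + -1 * x ^ 7 + -1 * x ^ 6 + -1 * x ^ 3 + -1 * x) * h2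
    have s9 : x ^ 512 = (x ^ 26 + x ^ 25 + x ^ 24 + x ^ 23 + x ^ 21 + x ^ 17 + x ^ 14 + x ^ 13 + x ^ 11 + x ^ 7 + x ^ 6 + x ^ 4 + 1) := by
      linear_combination (x ^ 256 + x ^ 25 + x ^ 23 + x ^ 22 + x ^ 21 + x ^ 20 + x ^ 19 + x ^ 18 + x ^ 17 + x ^ 15 + x ^ 14 + x ^ 13 + x ^ 10 + x ^ 8 + x ^ 7 + x ^ 3 + x) * s8 + (x ^ 23 + x ^ 22 + x ^ 18 + x ^ 17 + x ^ 15 + x ^ 14 + x ^ 13 + x ^ 8 + x ^ 7 + x ^ 5 + x ^ 4 + x ^ 2 + 1) * hP + (-1 * x ^ 49 + x ^ 46 + x ^ 45 + x ^ 44 + 2 * x ^ 43 + 2 * x ^ 42 + x ^ 41 + 2 * x ^ 40 + 2 * x ^ 39 + 3 * x ^ 38 + 2 * x ^ 37 + 3 * x ^ 36 + 3 * x ^ 35 + 2 * x ^ 34 + 3 * x ^ 33 + 2 * x ^ 32 + x ^ 31 + x ^ 30 + 3 * x ^ 28 + x ^ 27 + x ^ 26 + x ^ 25 + 2 * x ^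 24 + x ^ 23 + 2 * x ^ 21 + x ^ 20 + -1 * x ^ 19 + x ^ 18 + x ^ 16 + -1 * x ^ 14 + -1 * x ^ 13 + -2 * x ^ 12 + x ^ 11 + -2 * x ^ 7 + -1 * x ^ 5 + -1) * h2
    have s10 : x ^ 1024 = (x ^ 25 + x ^ 24 + x ^ 23 + x ^ 22 + x ^ 20 + x ^ 16 + x ^ 13 + x ^ 12 + x ^ 10 + x ^ 6 + x ^ 5 + x ^ 3 + 1) := by
      linear_combination (x ^ 512 + x ^ 26 + x ^ 25 + x ^ 24 + x ^ 23 + x ^ 21 + x ^ 17 + x ^ 14 + x ^ 13 + x ^ 11 + x ^ 7 + x ^ 6 + x ^ 4 + 1) * s9 + (x ^ 25 + x ^ 24 + x ^ 23 + x ^ 22 + x ^ 20 + x ^ 16 + x ^ 13 + x ^ 12 + x ^ 10 + x ^ 6 + x ^ 5 + x ^ 3) * hP + (x ^ 26 + -1 * x ^ 22 + x ^ 21 + -1 * x ^ 20 + x ^ 17 + -1 * x ^ 16 + x ^ 14 + -1 * x ^ 12 + x ^ 11 + -1 * x ^ 10 + x ^ 7 + -1 * x ^ 5 + x ^ 4 +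 -1 * x ^ 3) * h2
    have s11 : x ^ 2048 = (x ^ 23 + x ^ 22 + x ^ 21 + x ^ 20 + x ^ 18 + x ^ 14 + x ^ 11 + x ^ 10 + x ^ 8 + x ^ 4 + x ^ 3 + x + 1) := by
      linear_combination (x ^ 1024 + x ^ 25 + x ^ 24 + x ^ 23 + x ^ 22 + x ^ 20 + x ^ 16 + x ^ 13 + x ^ 12 + x ^ 10 + x ^ 6 + x ^ 5 + x ^ 3 + 1) * s10 + (x ^ 23 + x ^ 22 + x ^ 21 + x ^ 20 + x ^ 18 + x ^ 14 + x ^ 11 + x ^ 10 + x ^ 8 + x ^ 4 + x ^ 3 + x) * hP + (x ^ 25 + x ^ 24 + -1 * x ^ 21 + -1 * x ^ 18 + x ^ 16 + -1 * x ^ 14 + x ^ 13 + x ^ 12 + -1 * x ^ 11 + -1 * x ^ 8 + x ^ 6 + x ^ 5 + -1 * x ^ 4 + -1 * x) * h2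
    have s12 : x ^ 4096 = (x ^ 26 + x ^ 25 + x ^ 22 + x ^ 18 + x ^ 16 + x ^ 15 + x ^ 13 + x ^ 12 + x ^ 10 + x ^ 9 + x ^ 5 + x ^ 4 + x ^ 2) := by
      linear_combination (x ^ 2048 + x ^ 23 + x ^ 22 + x ^ 21 + x ^ 20 + x ^ 18 + x ^ 14 + x ^ 11 + x ^ 10 + x ^ 8 + x ^ 4 + x ^ 3 + x + 1) * s11 + (x ^ 19 + x ^ 18 + x ^ 17 + x ^ 16 + x ^ 14 + x ^ 10 + x ^ 7 + x ^ 6 + x ^ 4 + 1) * hP + (x ^ 24 + 2 * x ^ 23 + x ^ 22 + 2 * x ^ 21 + x ^ 20 + -1 * x ^ 16 + x ^ 14 + 2 * x ^ 11 + x ^ 8 + x ^ 4 + x ^ 3 + x) * h2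
    have s13 : x ^ 8192 = (x ^ 23 + x ^ 22 + x ^ 14 + x ^ 12 + x ^ 11 + x ^ 10 + x ^ 9 + x ^ 8 + x ^ 5 + x ^ 4 + x ^ 3 + x) := by
      linear_combination (x ^ 4096 + x ^ 26 + x ^ 25 + x ^ 22 + x ^ 18 + x ^ 16 + x ^ 15 + x ^ 13 + x ^ 12 + x ^ 10 + x ^ 9 + x ^ 5 + x ^ 4 + x ^ 2) * s12 + (x ^ 25 + x ^ 24 + x ^ 23 + x ^ 22 + x ^ 21 + x ^ 19 + x ^ 18 + x ^ 13 + x ^ 11 + x ^ 6 + x ^ 5 + x ^ 3 + x) * hP + (-1 * x ^ 50 + -2 * x ^ 49 + -1 * x ^ 48 + -1 * x ^ 47 + -2 * x ^ 46 + -2 * x ^ 45 + -1 * x ^ 43 + x ^ 41 + -1 * x ^ 39 + x ^ 38 + -1 * x ^ 37 + -1 * x ^ 36 + x ^ 35 + 2 * x ^ 34 + -2 * x ^ 33 + -1 * x ^ 32 + x ^ 31 + -1 * x ^ 29 + x ^ 28 + x ^ 27 + x ^ 24 + -1 * x ^ 23 + 2 * x ^ 22 + 2 * x ^ 20 + 2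 * x ^ 17 + x ^ 15 + 2 * x ^ 14 + -1 * x ^ 13 + -1 * x ^ 11 + -1 * x ^ 10 + -1 * x ^ 8 + x ^ 7 + -1 * x ^ 5 + -1 * x ^ 3 + -1 * x) * h2
    have s14 : x ^ 16384 = (x ^ 25 + x ^ 24 + x ^ 23 + x ^ 22 + x ^ 19 + x ^ 17 + x ^ 16 + x ^ 14 + x ^ 12 + x ^ 8 + x ^ 7 + x ^ 6 + x ^ 5 + x ^ 4) := by
      linear_combination (x ^ 8192 + x ^ 23 + x ^ 22 + x ^ 14 + x ^ 12 + x ^ 11 + x ^ 10 + x ^ 9 + x ^ 8 + x ^ 5 + x ^ 4 + x ^ 3 + x) * s13 + (x ^ 19 + x ^ 18 + x ^ 17 + x ^ 16 + x ^ 15 + x ^ 13 + x ^ 12 + x ^ 11 + x ^ 10 + x ^ 5 + x ^ 4 + x ^ 2) * hP + (-1 * x ^ 44 + -2 * x ^ 43 + -2 * x ^ 42 + -2 * x ^ 41 + -2 * x ^ 40 + -2 * x ^ 39 + -2 * x ^ 38 + -2 * x ^ 37 + -1 * x ^ 36 + -1 * x ^ 35 + -1 * x ^ 31 + -2 * x ^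 30 + -3 * x ^ 29 + -1 * x ^ 28 + -1 * x ^ 27 + -1 * x ^ 25 + -1 * x ^ 24 + x ^ 21 + 3 * x ^ 15 + 2 * x ^ 14 + 3 * x ^ 13 + x ^ 12 + x ^ 11 + x ^ 9 + x ^ 8 + x ^ 6) * h2
    have s15 : x ^ 32768 = (x ^ 26 + x ^ 25 + x ^ 24 + x ^ 23 + x ^ 22 + x ^ 20 + x ^ 19 + x ^ 17 + x ^ 16 + x ^ 15 + x ^ 14 + x ^ 13 + x ^ 12 + x ^ 9 + x ^ 5) := by
      linear_combination (x ^ 16384 + x ^ 25 + x ^ 24 + x ^ 23 + x ^ 22 + x ^ 19 + x ^ 17 + x ^ 16 + x ^ 14 + x ^ 12 + x ^ 8 + x ^ 7 + x ^ 6 + x ^ 5 + x ^ 4) * s14 + (x ^ 23 + x ^ 22 + x ^ 21 + x ^ 20 + x ^ 18 + x ^ 14 + x ^ 13 + x ^ 12 + x ^ 9 + x ^ 8 + x ^ 5) * hP + (-1 * x ^ 45 + x ^ 42 + 2 * x ^ 41 + x ^ 39 + -1 * x ^ 35 + -1 * x ^ 34 + x ^ 33 + 3 * x ^ 31 + 2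 * x ^ 30 + 3 * x ^ 29 + 2 * x ^ 28 + 2 * x ^ 24 + x ^ 22 + x ^ 21 + x ^ 18 + -1 * x ^ 17 + x ^ 12 + 2 * x ^ 11 + x ^ 10 + -1 * x ^ 5) * h2
    have s16 : x ^ 65536 = (x ^ 26 + x ^ 25 + x ^ 24 + x ^ 23 + x ^ 20 + x ^ 18 + x ^ 15 + x ^ 14 + x ^ 12 + x ^ 11 + x ^ 9 + x ^ 6 + x ^ 3 + x + 1) := by
      linear_combination (x ^ 32768 + x ^ 26 + x ^ 25 + x ^ 24 + x ^ 23 + x ^ 22 + x ^ 20 + x ^ 19 + x ^ 17 + x ^ 16 + x ^ 15 + x ^ 14 + x ^ 13 + x ^ 12 + x ^ 9 + x ^ 5) * s15 + (x ^ 25 + x ^ 24 + x ^ 23 + x ^ 22 + x ^ 20 + x ^ 17 + x ^ 15 + x ^ 14 + x ^ 13 + x ^ 10 + x ^ 8 + x ^ 7 + x ^ 5 + x ^ 3 + x + 1) * hP + (x ^ 48 + x ^ 46 + 2 * x ^ 45 + x ^ 44 + 2 * x ^ 43 + 2 * x ^ 42 + 2 * x ^ 41 + 2 * x ^ 40 +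 3 * x ^ 39 + 3 * x ^ 38 + 2 * x ^ 37 + 3 * x ^ 36 + 2 * x ^ 35 + 2 * x ^ 34 + 2 * x ^ 33 + 2 * x ^ 31 + x ^ 29 + x ^ 28 + -1 * x ^ 27 + -2 * x ^ 25 + -2 * x ^ 23 + -2 * x ^ 22 + -2 * x ^ 20 + -1 * x ^ 19 + -1 * x ^ 18 + -1 * x ^ 17 + -1 * x ^ 16 + -4 * x ^ 15 + -1 * x ^ 14 + -2 * x ^ 13 + -2 * x ^ 12 + -1 * x ^ 11 + -1 * x ^ 10 + -1 * x ^ 9 + -2 * x ^ 8 + -1 * x ^ 7 + -1 * x ^ 6 + -1 * x ^ 5 + -1 * x ^ 3 + -1 * x + -1) * h2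
    have s17 : x ^ 131072 = (x ^ 25 + x ^ 24 + x ^ 22 + x ^ 20 + x ^ 18 + x ^ 15 + x ^ 13 + x ^ 12 + x ^ 11 + x ^ 8 + x ^ 3 + x ^ 2 + 1) := by
      linear_combination (x ^ 65536 + x ^ 26 + x ^ 25 + x ^ 24 + x ^ 23 + x ^ 20 + x ^ 18 + x ^ 15 + x ^ 14 + x ^ 12 + x ^ 11 + x ^ 9 + x ^ 6 + x ^ 3 + x + 1) * s16 + (x ^ 25 + x ^ 24 + x ^ 23 + x ^ 22 + x ^ 20 + x ^ 16 + x ^ 15 + x ^ 14 + x ^ 11 + x ^ 10 + x ^ 6 + x ^ 3) * hP + (-1 * x ^ 47 + x ^ 44 + x ^ 43 + -1 * x ^ 42 + x ^ 38 + 2 * x ^ 35 + x ^ 34 + x ^ 32 + -1 * x ^ 30 + 2 * x ^ 29 + -2 * x ^ 28 + 2 * x ^ 27 + 5 * x ^ 26 + 2 * x ^ 24 + 2 * x ^ 23 + -2 * x ^ 22 + 2 * x ^ 21 + x ^ 20 + x ^ 18 + x ^ 17 + 2 * x ^ 15 + x ^ 14 + 3 * x ^ 12 + -1 * x ^ 11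 + 2 * x ^ 9 + -1 * x ^ 8 + x ^ 7 + x ^ 6 + x ^ 4 + x) * h2
    have s18 : x ^ 262144 = (x ^ 26 + x ^ 24 + x ^ 21 + x ^ 20 + x ^ 19 + x ^ 18 + x ^ 14 + x ^ 11 + x ^ 10 + x ^ 9 + x ^ 8 + x ^ 6 + x ^ 5) := by
      linear_combination (x ^ 131072 + x ^ 25 + x ^ 24 + x ^ 22 + x ^ 20 + x ^ 18 + x ^ 15 + x ^ 13 + x ^ 12 + x ^ 11 + x ^ 8 + x ^ 3 + x ^ 2 + 1) * s17 + (x ^ 23 + x ^ 22 + x ^ 21 + x ^ 20 + x ^ 19 + x ^ 15 + x ^ 14 + x ^ 12 + x ^ 10 + x ^ 7 + x ^ 4 + 1) * hP + (-1 * x ^ 48 + -1 * x ^ 47 + -1 * x ^ 46 + -1 * x ^ 45 + x ^ 42 + -2 * x ^ 41 + x ^ 40 + -1 * x ^ 39 + x ^ 35 + -2 * x ^ 34 + 2 * x ^ 33 + -2 * x ^ 29 + x ^ 25 + x ^ 24 + 2 * x ^ 23 + -1 * x ^ 22 + x ^ 20 + -2 * x ^ 19 + x ^ 16 + x ^ 15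 + 2 * x ^ 13 + -1 * x ^ 12 + x ^ 11 + -1 * x ^ 9 + -1 * x ^ 7 + x ^ 3 + x ^ 2) * h2
    have s19 : x ^ 524288 = (x ^ 26 + x ^ 25 + x ^ 21 + x ^ 19 + x ^ 14 + x ^ 13 + x ^ 12 + x ^ 10 + x ^ 8 + x ^ 7 + x ^ 5 + x ^ 4 + x ^ 3 + x ^ 2 + x + 1) := by
      linear_combination (x ^ 262144 + x ^ 26 + x ^ 24 + x ^ 21 + x ^ 20 + x ^ 19 + x ^ 18 + x ^ 14 + x ^ 11 + x ^ 10 + x ^ 9 + x ^ 8 + x ^ 6 + x ^ 5) * s18 + (x ^ 25 + x ^ 24 + x ^ 20 + x ^ 18 + x ^ 13 + x ^ 12 + x ^ 11 + x ^ 9 + x ^ 7 + x ^ 6 + x ^ 4 + x ^ 3 + x ^ 2 + x + 1) * hP + (-1 * x ^ 51 + -1 * x ^ 49 + x ^ 45 + x ^ 44 + x ^ 41 + x ^ 40 + -1 * x ^ 36 + x ^ 35 + x ^ 34 + -1 * x ^ 33 + x ^ 32 + x ^ 30 + 2 * x ^ 29 + -1 * x ^ 27 + -1 * x ^ 26 +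 -2 * x ^ 25 + -2 * x ^ 21 + -2 * x ^ 18 + -1 * x ^ 14 + -1 * x ^ 13 + -2 * x ^ 12 + -1 * x ^ 11 + -1 * x ^ 10 + -2 * x ^ 9 + -2 * x ^ 8 + -2 * x ^ 7 + -1 * x ^ 6 + -1 * x ^ 5 + -1 * x ^ 4 + -1 * x ^ 3 + -1 * x ^ 2 + -1 * x + -1) * h2
    have s20 : x ^ 1048576 = (x ^ 24 + x ^ 23 + x ^ 22 + x ^ 21 + x ^ 20 + x ^ 18 + x ^ 17 + x ^ 16 + x ^ 15 + x ^ 14 + x ^ 13 + x ^ 10 + x ^ 6 + x ^ 5 + x ^ 4 + x + 1) := by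
      linear_combination (x ^ 524288 + x ^ 26 + x ^ 25 + x ^ 21 + x ^ 19 + x ^ 14 + x ^ 13 + x ^ 12 + x ^ 10 + x ^ 8 + x ^ 7 + x ^ 5 + x ^ 4 + x ^ 3 + x ^ 2 + x + 1) * s19 + (x ^ 25 + x ^ 24 + x ^ 23 + x ^ 22 + x ^ 21 + x ^ 19 + x ^ 18 + x ^ 17 + x ^ 16 + x ^ 15 + x ^ 14 + x ^ 11 + x ^ 7 + x ^ 6 + x ^ 5 + x ^ 2 + x) * hP + (-1 * x ^ 50 + -2 * x ^ 49 + -2 * x ^ 48 + -1 * x ^ 47 + -1 * x ^ 46 + -1 * x ^ 45 + -1 * x ^ 44 + -3 * x ^ 43 + -2 * x ^ 42 + -3 * x ^ 41 + -1 * x ^ 40 + -1 * x ^ 39 + -2 * x ^ 37 + -2 * x ^ 36 + -2 * x ^ 32 + -1 * x ^ 31 + -2 * x ^ 30 + -1 * x ^ 29 + x ^ 27 + 2 * x ^ 26 + -1 * x ^ 23 + x ^ 22 + x ^ 21 + x ^ 20 + x ^ 18 + 2 * x ^ 17 + x ^ 16 + 3 * x ^ 15 + 2 * x ^ 14 + 2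 * x ^ 13 + 3 * x ^ 12 + 2 * x ^ 11 + 2 * x ^ 10 + 2 * x ^ 9 + 3 * x ^ 8 + 2 * x ^ 7 + x ^ 6 + 2 * x ^ 5 + 2 * x ^ 4 + 2 * x ^ 3 + x ^ 2) * h2
    have s21 : x ^ 2097152 = (x ^ 26 + x ^ 24 + x ^ 23 + x ^ 22 + x ^ 20 + x ^ 19 + x ^ 16 + x ^ 13 + x ^ 11 + x ^ 9 + x ^ 6 + x ^ 5 + x ^ 3 + x ^ 2 + 1) := by
      linear_combination (x ^ 1048576 + x ^ 24 + x ^ 23 + x ^ 22 + x ^ 21 + x ^ 20 + x ^ 18 + x ^ 17 + x ^ 16 + x ^ 15 + x ^ 14 + x ^ 13 + x ^ 10 + x ^ 6 + x ^ 5 + x ^ 4 + x + 1) * s20 + (x ^ 21 + x ^ 20 + x ^ 19 + x ^ 18 + x ^ 16 + x ^ 13 + x ^ 11 + x ^ 10 + x ^ 9 + x ^ 6 + x ^ 5 + x ^ 3) * hP + (x ^ 44 + x ^ 42 + 2 * x ^ 41 + 2 * x ^ 40 + 3 * x ^ 39 + 3 * x ^ 38 + 3 * x ^ 37 + 2 *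 x ^ 36 + x ^ 35 + 2 * x ^ 34 + x ^ 33 + x ^ 32 + x ^ 31 + 2 * x ^ 30 + 2 * x ^ 29 + 2 * x ^ 28 + 2 * x ^ 27 + 2 * x ^ 26 + x ^ 25 + 2 * x ^ 24 + 2 * x ^ 23 + 4 * x ^ 22 + 2 * x ^ 21 + 2 * x ^ 20 + 2 * x ^ 19 + x ^ 18 + x ^ 17 + x ^ 16 + 2 * x ^ 15 + 2 * x ^ 14 + -1 * x ^ 13 + x ^ 10 + x ^ 7 + x ^ 6 + x ^ 5 + x ^ 4 + -1 * x ^ 3 + x) * h2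
    have s22 : x ^ 4194304 = (x ^ 26 + x ^ 24 + x ^ 23 + x ^ 22 + x ^ 21 + x ^ 20 + x ^ 19 + x ^ 18 + x ^ 17 + x ^ 16 + x ^ 14 + x ^ 11 + x ^ 10 + x ^ 9 + x ^ 8 + x ^ 7 + x ^ 6 + x ^ 2 + x + 1) := by
      linear_combination (x ^ 2097152 + x ^ 26 + x ^ 24 + x ^ 23 + x ^ 22 + x ^ 20 + x ^ 19 + x ^ 16 + x ^ 13 + x ^ 11 + x ^ 9 + x ^ 6 + x ^ 5 + x ^ 3 + x ^ 2 + 1) * s21 + (x ^ 25 + x ^ 24 + x ^ 20 + x ^ 19 + x ^ 17 + x ^ 16 + x ^ 14 + x ^ 11 + x ^ 10 + x ^ 6 + x ^ 4 + x ^ 2 + x) * hP + (-1 * x ^ 51 + x ^ 48 + x ^ 46 + x ^ 45 + x ^ 42 + -1 * x ^ 41 + x ^ 39 + -1 * x ^ 38 + 2 * x ^ 35 + -1 * x ^ 34 + x ^ 33 + 2 * x ^ 29 + x ^ 27 + x ^ 26 + 2 * x ^ 25 + 3 * x ^ 22 + -1 * x ^ 17 + x ^ 15 + x ^ 13 + x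 ^ 12 + x ^ 11 + -1 * x ^ 10 + x ^ 8 + 2 * x ^ 5 + x ^ 3 + -1 * x) * h2
    have s23 : x ^ 8388608 = (x ^ 24 + x ^ 20 + x ^ 19 + x ^ 17 + x ^ 16 + x ^ 14 + x ^ 13 + x ^ 12 + x ^ 11 + x ^ 10 + x ^ 9 + x ^ 7 + x ^ 6 + x ^ 5 + x ^ 2 + x) := by
      linear_combination (x ^ 4194304 + x ^ 26 + x ^ 24 + x ^ 23 + x ^ 22 + x ^ 21 + x ^ 20 + x ^ 19 + x ^ 18 + x ^ 17 + x ^ 16 + x ^ 14 + x ^ 11 + x ^ 10 + x ^ 9 + x ^ 8 + x ^ 7 + x ^ 6 + x ^ 2 + x + 1) * s22 + (x ^ 25 + x ^ 24 + x ^ 20 + x ^ 19 + x ^ 17 + x ^ 16 + x ^ 15 + x ^ 10 + x ^ 9 + x ^ 4 + x + 1) * hP + (-1 * x ^ 51 + x ^ 48 + x ^ 47 + x ^ 46 + 2 * x ^ 45 + 2 * x ^ 44 + 2 * x ^ 43 + 2 * x ^ 42 + 2 * x ^ 41 + 4 * x ^ 40 + 2 * x ^ 39 + 3 * x ^ 38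 + 3 * x ^ 37 + 3 * x ^ 36 + 3 * x ^ 35 + 3 * x ^ 34 + 4 * x ^ 33 + 4 * x ^ 32 + 3 * x ^ 31 + 5 * x ^ 30 + 4 * x ^ 29 + 5 * x ^ 28 + 4 * x ^ 27 + 5 * x ^ 26 + 4 * x ^ 25 + 3 * x ^ 24 + 4 * x ^ 23 + 3 * x ^ 22 + 4 * x ^ 21 + 4 * x ^ 20 + 3 * x ^ 19 + 4 * x ^ 18 + 3 * x ^ 17 + 2 * x ^ 16 + x ^ 15 + x ^ 14 + x ^ 13 + x ^ 12 + 2 * x ^ 11 + 2 * x ^ 10 + x ^ 9 + 2 * x ^ 8 + x ^ 7 + -1 * x ^ 5 + x ^ 3 + x ^ 2) * h2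
    have s24 : x ^ 16777216 = (x ^ 23 + x ^ 21 + x ^ 20 + x ^ 19 + x ^ 18 + x ^ 11 + x ^ 10 + x ^ 8 + x ^ 7 + x ^ 4 + x) := by
      linear_combination (x ^ 8388608 + x ^ 24 + x ^ 20 + x ^ 19 + x ^ 17 + x ^ 16 + x ^ 14 + x ^ 13 + x ^ 12 + x ^ 11 + x ^ 10 + x ^ 9 + x ^ 7 + x ^ 6 + x ^ 5 + x ^ 2 + x) * s23 + (x ^ 21 + x ^ 20 + x ^ 17 + x ^ 14 + x ^ 12 + x ^ 10 + x ^ 6 + x ^ 2 + x) * hP + (-1 * x ^ 47 + -1 * x ^ 46 + -1 * x ^ 45 + -1 * x ^ 42 + x ^ 40 + -1 * x ^ 39 + x ^ 37 + x ^ 36 + x ^ 34 + 3 * x ^ 33 + 3 * x ^ 31 + 4 * x ^ 30 + 3 * x ^ 29 + 2 * x ^ 27 + 4 * x ^ 26 + 4 * x ^ 25 + 2 * x ^ 24 + 4 * x ^ 23 + 4 * x ^ 22 + 4 * x ^ 21 + 2 * x ^ 20 + 3 * x ^ 19 + 4 * x ^ 18 + 2 * x ^ 17 + 3 * x ^ 16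 + 3 * x ^ 15 + 2 * x ^ 14 + 2 * x ^ 13 + 3 * x ^ 12 + 2 * x ^ 11 + x ^ 8 + x ^ 7 + x ^ 3 + -1 * x) * h2
    have s25 : x ^ 33554432 = (x ^ 26 + x ^ 24 + x ^ 20 + x ^ 19 + x ^ 17 + x ^ 15 + x ^ 13 + x ^ 11 + x ^ 6 + x ^ 5 + x ^ 3) := by
      linear_combination (x ^ 16777216 + x ^ 23 + x ^ 21 + x ^ 20 + x ^ 19 + x ^ 18 + x ^ 11 + x ^ 10 + x ^ 8 + x ^ 7 + x ^ 4 + x) * s24 + (x ^ 19 + x ^ 18 + x ^ 14 + x ^ 13 + x ^ 11 + x ^ 10 + x ^ 9 + x ^ 7 + x ^ 6 + x ^ 5 + x ^ 3 + x ^ 2) * hP + (-1 * x ^ 45 + x ^ 42 + x ^ 41 + x ^ 39 + -1 * x ^ 37 + -2 * x ^ 36 + -2 * x ^ 35 + -1 * x ^ 34 + -2 * x ^ 33 + -2 * x ^ 32 + x ^ 30 + -1 * x ^ 26 + -1 * x ^ 25 + -1 * x ^ 24 + -1 * x ^ 23 + x ^ 22 + -1 * x ^ 21 + -1 * x ^ 20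 + -1 * x ^ 19 + -1 * x ^ 18 + -2 * x ^ 17 + -1 * x ^ 16 + -1 * x ^ 14 + -2 * x ^ 13 + x ^ 12 + -2 * x ^ 10 + x ^ 8 + -1 * x ^ 7 + -1 * x ^ 6 + -1 * x ^ 3) * h2
    have s26 : x ^ 67108864 = (x ^ 26 + x ^ 24 + x ^ 23 + x ^ 22 + x ^ 21 + x ^ 20 + x ^ 19 + x ^ 18 + x ^ 16 + x ^ 15 + x ^ 14 + x ^ 11 + x ^ 9 + x ^ 8 + x ^ 4 + x ^ 2 + x) := by
      linear_combination (x ^ 33554432 + x ^ 26 + x ^ 24 + x ^ 20 + x ^ 19 + x ^ 17 + x ^ 15 + x ^ 13 + x ^ 11 + x ^ 6 + x ^ 5 + x ^ 3) * s25 + (x ^ 25 + x ^ 24 + x ^ 20 + x ^ 18 + x ^ 15 + x ^ 14 + x ^ 13 + x ^ 12 + x ^ 7 + x ^ 4 + x ^ 2 + x) * hP + (-1 * x ^ 51 + -1 * x ^ 49 + -1 * x ^ 47 + x ^ 43 + -2 * x ^ 42 + x ^ 41 + -2 * x ^ 40 + -2 * x ^ 38 + x ^ 37 + -1 * x ^ 36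 + x ^ 35 + -1 * x ^ 33 + x ^ 30 + -1 * x ^ 29 + -1 * x ^ 28 + -2 * x ^ 27 + -1 * x ^ 26 + -1 * x ^ 25 + -1 * x ^ 21 + -1 * x ^ 20 + -2 * x ^ 19 + -2 * x ^ 15 + -1 * x ^ 14 + -1 * x ^ 13 + -1 * x ^ 12 + -1 * x ^ 9 + -1 * x ^ 7 + -1 * x ^ 4 + -1 * x ^ 2 + -1 * x) * h2
    have s27 : x ^ 134217728 = (x) := by
      linear_combination (x ^ 67108864 + x ^ 26 + x ^ 24 + x ^ 23 + x ^ 22 + x ^ 21 + x ^ 20 + x ^ 19 + x ^ 18 + x ^ 16 + x ^ 15 + x ^ 14 + x ^ 11 + x ^ 9 + x ^ 8 + x ^ 4 + x ^ 2 + x) * s26 + (x ^ 25 + x ^ 24 + x ^ 20 + x ^ 19 + x ^ 17 + x ^ 16 + x ^ 15 + x ^ 10 + x ^ 9 + x ^ 7 + x ^ 6 + x ^ 4 + x ^ 2 + x) * hP + (-1 * x ^ 51 + x ^ 48 + x ^ 47 + x ^ 46 + 2 * x ^ 45 + 2 * x ^ 44 + x ^ 43 + 2 * x ^ 42 + 2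 * x ^ 41 + 3 * x ^ 40 + 2 * x ^ 39 + 3 * x ^ 38 + 3 * x ^ 37 + 2 * x ^ 36 + 3 * x ^ 35 + 2 * x ^ 34 + x ^ 33 + x ^ 32 + 3 * x ^ 30 + x ^ 29 + x ^ 28 + 2 * x ^ 27 + 2 * x ^ 26 + 2 * x ^ 25 + x ^ 24 + 3 * x ^ 23 + 2 * x ^ 22 + 2 * x ^ 20 + x ^ 19 + x ^ 18 + x ^ 17 + -2 * x ^ 14 + x ^ 13 + x ^ 12 + x ^ 10 + -1 * x ^ 9 + -1 * x ^ 7 + x ^ 5 + x ^ 3 + -1 * x) * h2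
    have h512 : x ^ 512 = x := key x s27 hxn
    have hm : (x ^ 26 + x ^ 25 + x ^ 24 + x ^ 23 + x ^ 21 + x ^ 17 + x ^ 14 + x ^ 13 + x ^ 11 + x ^ 7 + x ^ 6 + x ^ 4 + x + 1) = 0 := by
      linear_combination h512 - s9 + (x) * h2
    exact one_ne_zero (α := GaloisField 2 n) (by linear_combination (x ^ 24 + x ^ 21 + x ^ 20 + x ^ 19 + x ^ 17 + x ^ 16 + x ^ 15 + x ^ 13 + x ^ 9 + x ^ 8 + x ^ 6 + x ^ 2 + x) * hP + (x ^ 25 + x ^ 22 + x ^ 21 + x ^ 20 + x ^ 18 + x ^ 17 + x ^ 16 + x ^ 14 + x ^ 10 + x ^ 9 + x ^ 7 + x ^ 3 + x ^ 2 + 1) * hm + (-1 * x ^ 51 + -1 * x ^ 50 + -1 * x ^ 49 + -2 * x ^ 48 + -2 * x ^ 47 + -4 * x ^ 46 + -3 * x ^ 45 + -3 * x ^ 44 + -4 * x ^ 43 + -5 * x ^ 42 + -4 * x ^ 41 + -3 * x ^ 40 + -5 * x ^ 39 + -4 * x ^ 38 + -3 * x ^ 37 + -3 * x ^ 36 + -6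 * x ^ 35 + -5 * x ^ 34 + -6 * x ^ 33 + -5 * x ^ 32 + -7 * x ^ 31 + -4 * x ^ 30 + -5 * x ^ 29 + -7 * x ^ 28 + -7 * x ^ 27 + -6 * x ^ 26 + -5 * x ^ 25 + -7 * x ^ 24 + -6 * x ^ 23 + -4 * x ^ 22 + -6 * x ^ 21 + -6 * x ^ 20 + -2 * x ^ 19 + -3 * x ^ 18 + -4 * x ^ 17 + -5 * x ^ 16 + -3 * x ^ 15 + -4 * x ^ 14 + -4 * x ^ 13 + -2 * x ^ 11 + -2 * x ^ 10 + -3 * x ^ 9 + -2 * x ^ 8 + -2 * x ^ 7 + -2 * x ^ 6 + -1 * x ^ 4 + -1 * x ^ 3 + -1 * x ^ 2 + -1 * x) * h2)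
end
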